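/- arXiv:2604.05098 — 4 statements merged into one kernel-verified Lean document; each statement's English description precedes it below -/
import Mathlib

section
/- Let n ≥ 1 be an integer and h = 1/(n+1). The 1D Laplacian matrix P satisfies P_{i,i} = 2/h, P_{i,i'} = −1/h whenever |i−i'| = 1, and P_{i,i'} = 0 whenever |i−i'| ≥ 2. Moreover P is symmetric positive definite and every eigenvalue λ of P satisfies 4h ≤ λ ≤ 4/h; in particular the condition number of P is at most 1/h². -/
/-!
Each `g i` is `h⁻¹` times a combination, with coefficients `±1`, of the indicators of the mesh
cells `(k h, (k + 1) h)`, and these indicators are orthogonal in `L²(0, 1)` with squared norm `h`.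
Hence `P = h⁻¹ • Dᵀ * D` for the `(n + 1) × n` matrix `D` sending nodal values to their
increments over the cells. The entries and the symmetry of `P` are read off from this, and
`v ⬝ P v = h⁻¹ ∑ₖ (b (k + 1) - b k) ^ 2`, where `b` extends `v` by zero at both boundary nodes.
The upper eigenvalue bound is `(x - y) ^ 2 ≤ 2 x ^ 2 + 2 y ^ 2`; the lower one is a discrete
Poincaré inequality.
-/

open Finset Matrix MeasureTheory

section Cells

variable {h : ℝ}

noncomputable def cellIndicator (h : ℝ) (k : ℕ) : ℝ → ℝ :=
  (Set.Ioo (k * h) ((k + 1) * h)).indicator 1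

lemma eq_of_mem_cell_of_mem_cell (hh : 0 < h) {k m : ℕ} {x : ℝ}
    (hk : x ∈ Set.Ioo (k * h) ((k + 1) * h)) (hm : x ∈ Set.Ioo (m * h) ((m + 1) * h)) :
    k = m := by
  have hkm : (k : ℝ) < m + 1 := lt_of_mul_lt_mul_right (hk.1.trans hm.2) hh.le
  have hmk : (m : ℝ) < k + 1 := lt_of_mul_lt_mul_right (hm.1.trans hk.2) hh.le
  norm_cast at hkm hmk
  omega

lemma cellIndicator_mul_cellIndicator (hh : 0 < h) (k m : ℕ) (x : ℝ) :
    cellIndicator h k x * cellIndicator h m x = if k = m then cellIndicator h k x else 0 := by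
  unfold cellIndicator
  by_cases hk : x ∈ Set.Ioo (k * h) ((k + 1) * h)
  · by_cases hm : x ∈ Set.Ioo (m * h) ((m + 1) * h)
    · obtain rfl := eq_of_mem_cell_of_mem_cell hh hk hm
      simp [hk]
    · have : k ≠ m := by rintro rfl; exact hm hk
      simp [hm, this]
  · simp [hk]

lemma integral_cellIndicator (hh : 0 ≤ h) {k : ℕ} (hk : (k + 1) * h ≤ 1) :
    ∫ x in Set.Icc 0 1, cellIndicator h k x = h := by
  have hsub : Set.Ioo (k * h) ((k + 1) * h) ⊆ Set.Icc 0 1 :=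
    Set.Ioo_subset_Icc_self.trans (Set.Icc_subset_Icc (by positivity) hk)
  rw [cellIndicator, integral_indicator_one measurableSet_Ioo,
    measureReal_restrict_apply measurableSet_Ioo, Set.inter_eq_left.2 hsub,
    Real.volume_real_Ioo, max_eq_left] <;> linarith

lemma integral_sum_mul_sum_cellIndicator (hh : 0 < h) {N : ℕ} (hN : N * h ≤ 1) (c d : ℕ → ℝ) :
    ∫ x in Set.Icc 0 1, (∑ k ∈ range N, c k * cellIndicator h k x) *
        (∑ k ∈ range N, d k * cellIndicator h k x) = h * ∑ k ∈ range N, c k * d k := by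
  have hprod : ∀ x, (∑ k ∈ range N, c k * cellIndicator h k x) *
      (∑ k ∈ range N, d k * cellIndicator h k x) =
        ∑ k ∈ range N, c k * d k * cellIndicator h k x := by
    intro x
    simp_rw [sum_mul_sum, mul_mul_mul_comm, cellIndicator_mul_cellIndicator hh, mul_ite, mul_zero]
    refine sum_congr rfl fun k hk => ?_
    rw [sum_ite_eq, if_pos hk]
  have hint : ∀ k ∈ range N, Integrable (fun x => c k * d k * cellIndicator h k x)
      (volume.restrict (Set.Icc 0 1)) := fun k _ =>
    ((integrable_const 1).indicator measurableSet_Ioo).const_mul _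
  simp_rw [hprod]
  rw [integral_finsetSum _ hint, mul_sum]
  refine sum_congr rfl fun k hk => ?_
  have hk' : ((k : ℝ) + 1) * h ≤ 1 := by
    have : (k : ℝ) + 1 ≤ N := by exact_mod_cast mem_range.1 hk
    nlinarith
  rw [integral_const_mul, integral_cellIndicator hh.le hk']
  ring

lemma slope_eq_cellIndicator_sub (i : ℕ) (x : ℝ) :
    (if (i : ℝ) * h < x ∧ x < ((i : ℝ) + 1) * h then 1 / h
      else if ((i : ℝ) + 1) * h < x ∧ x < ((i : ℝ) + 2) * h then -(1 / h) else 0) =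
      (cellIndicator h i x - cellIndicator h (i + 1) x) / h := by
  simp only [cellIndicator, Set.indicator_apply, Set.mem_Ioo, Pi.one_apply]
  push_cast
  rw [show (i : ℝ) + 1 + 1 = i + 2 by ring]
  split_ifs with h₁ h₂ <;> first | ring1 | tauto | linarith [h₁.2, h₂.1]

end Cells

section DirichletSequences

variable {b : ℕ → ℝ}

/-- `2 * b k` is the sum of the increments left of `k` minus the sum of those right of `k`. -/
lemma four_mul_sq_le_mul_sum_sq_sub (hb0 : b 0 = 0) {M k : ℕ} (hbM : b M = 0) (hk : k ≤ M) :
    4 * b k ^ 2 ≤ M * ∑ j ∈ range M, (b (j + 1) - b j) ^ 2 := by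
  set s : ℕ → ℝ := fun j => if j < k then 1 else -1
  have hsplit : ∑ j ∈ range M, s j * (b (j + 1) - b j) = 2 * b k := by
    rw [← sum_range_add_sum_Ico _ hk]
    have hleft : ∑ j ∈ range k, s j * (b (j + 1) - b j) = b k := by
      rw [sum_congr rfl fun j hj => by rw [show s j = 1 from if_pos (mem_range.1 hj), one_mul],
        sum_range_sub, hb0, sub_zero]
    have hright : ∑ j ∈ Ico k M, s j * (b (j + 1) - b j) = b k := by
      rw [sum_congr rfl fun j hj => by
          rw [show s j = -1 from if_neg (not_lt.2 (mem_Ico.1 hj).1), neg_one_mul],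
        sum_neg_distrib, sum_Ico_eq_sub _ hk, sum_range_sub, sum_range_sub, hbM, hb0]
      ring
    rw [hleft, hright]
    ring
  have hs : ∑ j ∈ range M, s j ^ 2 = M := by
    simp [s, apply_ite (· ^ 2)]
  calc 4 * b k ^ 2 = (∑ j ∈ range M, s j * (b (j + 1) - b j)) ^ 2 := by rw [hsplit]; ring
    _ ≤ (∑ j ∈ range M, s j ^ 2) * ∑ j ∈ range M, (b (j + 1) - b j) ^ 2 :=
      sum_mul_sq_le_sq_mul_sq _ _ _
    _ = _ := by rw [hs]

lemma four_mul_sum_sq_le (hb0 : b 0 = 0) {N : ℕ} (hbN : b (N + 1) = 0) :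
    4 * ∑ k ∈ range N, b (k + 1) ^ 2 ≤
      (N + 1) ^ 2 * ∑ j ∈ range (N + 1), (b (j + 1) - b j) ^ 2 := by
  set D := ∑ j ∈ range (N + 1), (b (j + 1) - b j) ^ 2
  have hD : 0 ≤ D := sum_nonneg fun j _ => sq_nonneg _
  calc 4 * ∑ k ∈ range N, b (k + 1) ^ 2 = ∑ k ∈ range N, 4 * b (k + 1) ^ 2 := mul_sum ..
    _ ≤ ∑ k ∈ range N, ((N + 1 : ℕ) : ℝ) * D := sum_le_sum fun k hk =>
      four_mul_sq_le_mul_sum_sq_sub hb0 hbN (by simp at hk; omega)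
    _ = N * ((N + 1) * D) := by simp
    _ ≤ (N + 1) * ((N + 1) * D) := by gcongr; linarith
    _ = _ := by ring

lemma sum_sq_sub_le (hb0 : b 0 = 0) {N : ℕ} (hbN : b (N + 1) = 0) :
    ∑ j ∈ range (N + 1), (b (j + 1) - b j) ^ 2 ≤ 4 * ∑ k ∈ range N, b (k + 1) ^ 2 := by
  calc ∑ j ∈ range (N + 1), (b (j + 1) - b j) ^ 2
      ≤ ∑ j ∈ range (N + 1), (2 * b (j + 1) ^ 2 + 2 * b j ^ 2) :=
        sum_le_sum fun j _ => by nlinarith [sq_nonneg (b (j + 1) + b j)]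
    _ = 4 * ∑ k ∈ range N, b (k + 1) ^ 2 := by
      rw [sum_add_distrib, ← mul_sum, ← mul_sum, sum_range_succ,
        sum_range_succ' (fun j => b j ^ 2), hb0, hbN]
      ring

end DirichletSequences

section Rayleigh

variable {ι : Type*} [Fintype ι]

lemma dotProduct_self_pos_of_ne_zero {v : ι → ℝ} (hv : v ≠ 0) : 0 < v ⬝ᵥ v := by
  simpa using dotProduct_self_star_pos_iff.2 hv

lemma dotProduct_transpose_mul_self_mulVec {m R : Type*} [Fintype m] [CommRing R]
    (A : Matrix m ι R) (v : ι → R) : v ⬝ᵥ (Aᵀ * A) *ᵥ v = A *ᵥ v ⬝ᵥ A *ᵥ v := by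
  rw [← mulVec_mulVec, dotProduct_mulVec, vecMul_transpose]

lemma mem_Icc_of_mulVec_eq_smul {A : Matrix ι ι ℝ} {a c : ℝ}
    (hA : ∀ w, a * (w ⬝ᵥ w) ≤ w ⬝ᵥ A *ᵥ w ∧ w ⬝ᵥ A *ᵥ w ≤ c * (w ⬝ᵥ w))
    {lam : ℝ} {v : ι → ℝ} (hv : v ≠ 0) (hAv : A *ᵥ v = lam • v) : a ≤ lam ∧ lam ≤ c := by
  have hvv := dotProduct_self_pos_of_ne_zero hv
  have hquot : v ⬝ᵥ A *ᵥ v = lam * (v ⬝ᵥ v) := by rw [hAv, dotProduct_smul, smul_eq_mul]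
  obtain ⟨hlo, hhi⟩ := hA v
  rw [hquot] at hlo hhi
  exact ⟨le_of_mul_le_mul_right hlo hvv, le_of_mul_le_mul_right hhi hvv⟩

end Rayleigh

section DifferenceMatrix

variable {n : ℕ}

/-- The slope, in units of `1 / h`, of the hat function at node `i + 1` on the cell `k`. -/
def diffCoeff (k i : ℕ) : ℝ := (if k = i then 1 else 0) - if k = i + 1 then 1 else 0

def diffMatrix (n : ℕ) : Matrix (Fin (n + 1)) (Fin n) ℝ := Matrix.of fun k i => diffCoeff k i

lemma sum_diffCoeff_mul {M i : ℕ} (hi : i + 1 < M) (f : ℕ → ℝ) :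
    ∑ k ∈ range M, diffCoeff k i * f k = f i - f (i + 1) := by
  simp [diffCoeff, sub_mul, ite_mul, sum_sub_distrib, sum_ite_eq', hi, (by omega : i < M)]

lemma sum_diffCoeff_mul_succ {b : ℕ → ℝ} {N k : ℕ} (hb0 : b 0 = 0) (hbN : b (N + 1) = 0)
    (hk : k ≤ N) : ∑ i ∈ range N, diffCoeff k i * b (i + 1) = b (k + 1) - b k := by
  have hright : ∑ i ∈ range N, (if k = i then b (i + 1) else 0) = b (k + 1) := by
    rw [sum_ite_eq]
    split_ifs with hkN
    · rfl
    · rw [show k = N by simp at hkN; omega, hbN]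
  have hleft : ∑ i ∈ range N, (if k = i + 1 then b (i + 1) else 0) = b k := by
    have := sum_range_succ' (fun i => if k = i then b i else 0) N
    simp only [hb0, ite_self, add_zero] at this
    rw [← this, sum_ite_eq, if_pos (mem_range.2 (by omega))]
  simp only [diffCoeff, sub_mul, ite_mul, one_mul, zero_mul, sum_sub_distrib, hright, hleft]

/-- `v i` sits at node `i + 1`; the boundary nodes `0` and `n + 1` carry `0`. -/
def zeroExt (v : Fin n → ℝ) (j : ℕ) : ℝ :=
  if hj : 0 < j ∧ j ≤ n then v ⟨j - 1, by omega⟩ else 0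

lemma zeroExt_zero (v : Fin n → ℝ) : zeroExt v 0 = 0 := by simp [zeroExt]

lemma zeroExt_succ_self (v : Fin n → ℝ) : zeroExt v (n + 1) = 0 := by simp [zeroExt]

lemma zeroExt_succ (v : Fin n → ℝ) (i : Fin n) : zeroExt v (i + 1) = v i := by
  simp [zeroExt, i.isLt]

lemma diffMatrix_mulVec_apply (v : Fin n → ℝ) (k : Fin (n + 1)) :
    (diffMatrix n *ᵥ v) k = zeroExt v (k + 1) - zeroExt v k := by
  simp only [mulVec, dotProduct, diffMatrix, of_apply, ← zeroExt_succ v]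
  rw [Fin.sum_univ_eq_sum_range (fun i => diffCoeff k i * zeroExt v (i + 1)),
    sum_diffCoeff_mul_succ (zeroExt_zero v) (zeroExt_succ_self v) (Nat.lt_succ_iff.1 k.isLt)]

lemma dotProduct_self_eq_sum_zeroExt (v : Fin n → ℝ) :
    v ⬝ᵥ v = ∑ k ∈ range n, zeroExt v (k + 1) ^ 2 := by
  simp only [dotProduct, ← sq, ← zeroExt_succ v]
  exact Fin.sum_univ_eq_sum_range (fun k => zeroExt v (k + 1) ^ 2) n

lemma diffMatrix_mulVec_dotProduct_self (v : Fin n → ℝ) :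
    diffMatrix n *ᵥ v ⬝ᵥ diffMatrix n *ᵥ v =
      ∑ k ∈ range (n + 1), (zeroExt v (k + 1) - zeroExt v k) ^ 2 := by
  simp only [dotProduct, ← sq, diffMatrix_mulVec_apply]
  exact Fin.sum_univ_eq_sum_range (fun k => (zeroExt v (k + 1) - zeroExt v k) ^ 2) (n + 1)

lemma four_mul_dotProduct_self_le (v : Fin n → ℝ) :
    4 * (v ⬝ᵥ v) ≤ ((n : ℝ) + 1) ^ 2 * (diffMatrix n *ᵥ v ⬝ᵥ diffMatrix n *ᵥ v) := by
  rw [dotProduct_self_eq_sum_zeroExt, diffMatrix_mulVec_dotProduct_self]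
  exact four_mul_sum_sq_le (zeroExt_zero v) (zeroExt_succ_self v)

lemma diffMatrix_mulVec_dotProduct_self_le (v : Fin n → ℝ) :
    diffMatrix n *ᵥ v ⬝ᵥ diffMatrix n *ᵥ v ≤ 4 * (v ⬝ᵥ v) := by
  rw [diffMatrix_mulVec_dotProduct_self, dotProduct_self_eq_sum_zeroExt]
  exact sum_sq_sub_le (zeroExt_zero v) (zeroExt_succ_self v)

lemma transpose_diffMatrix_mul_self_apply (i i' : Fin n) :
    ((diffMatrix n)ᵀ * diffMatrix n) i i' =
      ∑ k ∈ range (n + 1), diffCoeff k i * diffCoeff k i' := by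
  simp only [mul_apply, transpose_apply, diffMatrix, of_apply]
  exact Fin.sum_univ_eq_sum_range (fun k => diffCoeff k i * diffCoeff k i') (n + 1)

lemma transpose_diffMatrix_mul_self_apply_eq (i i' : Fin n) :
    ((diffMatrix n)ᵀ * diffMatrix n) i i' = diffCoeff i i' - diffCoeff (i + 1) i' := by
  rw [transpose_diffMatrix_mul_self_apply, sum_diffCoeff_mul (M := n + 1) (by omega)]

lemma transpose_diffMatrix_mul_self_apply_self (i : Fin n) :
    ((diffMatrix n)ᵀ * diffMatrix n) i i = 2 := by
  rw [transpose_diffMatrix_mul_self_apply_eq]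
  norm_num [diffCoeff]

lemma transpose_diffMatrix_mul_self_apply_of_abs_sub_eq_one {i i' : Fin n}
    (hii' : |(i : ℤ) - i'| = 1) : ((diffMatrix n)ᵀ * diffMatrix n) i i' = -1 := by
  rw [transpose_diffMatrix_mul_self_apply_eq]
  have : (i : ℕ) = i' + 1 ∨ (i' : ℕ) = i + 1 := by
    rcases abs_eq zero_le_one |>.1 hii' with h | h <;> omega
  rcases this with h | h <;> simp [diffCoeff, h] <;> omega

lemma transpose_diffMatrix_mul_self_apply_of_two_le_abs_sub {i i' : Fin n}
    (hii' : 2 ≤ |(i : ℤ) - i'|) : ((diffMatrix n)ᵀ * diffMatrix n) i i' = 0 := by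
  rw [transpose_diffMatrix_mul_self_apply_eq]
  have : (i : ℕ) ≠ i' ∧ (i : ℕ) ≠ i' + 1 ∧ (i : ℕ) + 1 ≠ i' := by
    rcases le_abs.1 hii' with h | h <;> omega
  simp [diffCoeff, this]

end DifferenceMatrix

section Stiffness

variable {n : ℕ} {h : ℝ}

lemma stiffness_eq_inv_smul_transpose_diffMatrix_mul_self (hh : h = 1 / ((n : ℝ) + 1))
    {g : Fin n → ℝ → ℝ}
    (hg : ∀ (i : Fin n) (x : ℝ),
      g i x = if (i.val : ℝ) * h < x ∧ x < ((i.val : ℝ) + 1) * h then 1 / h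
        else if ((i.val : ℝ) + 1) * h < x ∧ x < ((i.val : ℝ) + 2) * h then -(1 / h)
        else 0)
    {P : Matrix (Fin n) (Fin n) ℝ}
    (hP : ∀ i i', P i i' = ∫ x in Set.Icc (0:ℝ) 1, g i x * g i' x) :
    P = h⁻¹ • ((diffMatrix n)ᵀ * diffMatrix n) := by
  have hpos : 0 < h := by rw [hh]; positivity
  have hmesh : ((n + 1 : ℕ) : ℝ) * h = 1 := by rw [hh]; push_cast; field_simp
  have hgsum : ∀ (j : Fin n) (x : ℝ),
      g j x = ∑ k ∈ range (n + 1), diffCoeff k j / h * cellIndicator h k x := by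
    intro j x
    rw [hg, slope_eq_cellIndicator_sub,
      ← sum_diffCoeff_mul (M := n + 1) (i := j) (by omega) (cellIndicator h · x), sum_div]
    simp only [div_mul_eq_mul_div]
  ext i i'
  simp_rw [hP, hgsum]
  rw [integral_sum_mul_sum_cellIndicator hpos hmesh.le, Matrix.smul_apply,
    transpose_diffMatrix_mul_self_apply, smul_eq_mul, mul_sum, mul_sum]
  refine sum_congr rfl fun k _ => ?_
  field_simp

lemma rayleigh_bounds_inv_smul_transpose_diffMatrix_mul_self (hh : h = 1 / ((n : ℝ) + 1))
    (v : Fin n → ℝ) :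
    4 * h * (v ⬝ᵥ v) ≤ v ⬝ᵥ (h⁻¹ • ((diffMatrix n)ᵀ * diffMatrix n)) *ᵥ v ∧
      v ⬝ᵥ (h⁻¹ • ((diffMatrix n)ᵀ * diffMatrix n)) *ᵥ v ≤ 4 / h * (v ⬝ᵥ v) := by
  have hinv : h⁻¹ = n + 1 := by rw [hh, one_div, inv_inv]
  have hlo := four_mul_dotProduct_self_le v
  have hhi := diffMatrix_mulVec_dotProduct_self_le v
  rw [smul_mulVec, dotProduct_smul, dotProduct_transpose_mul_self_mulVec, smul_eq_mul,
    div_eq_mul_inv, hinv, ← inv_inv h, hinv]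
  constructor
  · rw [mul_comm 4, mul_assoc, inv_mul_le_iff₀ (by positivity)]
    linarith
  · rw [mul_comm 4 ((n : ℝ) + 1), mul_assoc]
    exact mul_le_mul_of_nonneg_left hhi (by positivity)

end Stiffness

theorem stmt1_general (n : ℕ) (h : ℝ) (hh : h = 1 / ((n : ℝ) + 1))
    (g : Fin n → ℝ → ℝ)
    (hg : ∀ (i : Fin n) (x : ℝ),
      g i x = if (i.val : ℝ) * h < x ∧ x < ((i.val : ℝ) + 1) * h then 1 / h
        else if ((i.val : ℝ) + 1) * h < x ∧ x < ((i.val : ℝ) + 2) * h then -(1 / h)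
        else 0)
    (P : Matrix (Fin n) (Fin n) ℝ)
    (hP : ∀ i i', P i i' = ∫ x in Set.Icc (0:ℝ) 1, g i x * g i' x) :
    (∀ i, P i i = 2 / h) ∧
    (∀ i i' : Fin n, |(i.val : ℤ) - (i'.val : ℤ)| = 1 → P i i' = -(1 / h)) ∧
    (∀ i i' : Fin n, 2 ≤ |(i.val : ℤ) - (i'.val : ℤ)| → P i i' = 0) ∧
    P.IsSymm ∧ P.PosDef ∧
    (∀ (lam : ℝ) (v : Fin n → ℝ), v ≠ 0 → P.mulVec v = lam • v →
      4 * h ≤ lam ∧ lam ≤ 4 / h) ∧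
    (∀ (lam mu : ℝ) (v w : Fin n → ℝ), v ≠ 0 → w ≠ 0 →
      P.mulVec v = lam • v → P.mulVec w = mu • w → lam ≤ (1 / h ^ 2) * mu) := by
  have hpos : 0 < h := by rw [hh]; positivity
  have hP' := stiffness_eq_inv_smul_transpose_diffMatrix_mul_self hh hg hP
  have hentry : ∀ i i', P i i' = h⁻¹ * ((diffMatrix n)ᵀ * diffMatrix n) i i' := fun i i' => by
    rw [hP', Matrix.smul_apply, smul_eq_mul]
  have hrayleigh : ∀ v, 4 * h * (v ⬝ᵥ v) ≤ v ⬝ᵥ P *ᵥ v ∧ v ⬝ᵥ P *ᵥ v ≤ 4 / h * (v ⬝ᵥ v) :=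
    hP' ▸ rayleigh_bounds_inv_smul_transpose_diffMatrix_mul_self hh
  have heig : ∀ (lam : ℝ) (v : Fin n → ℝ), v ≠ 0 → P *ᵥ v = lam • v → 4 * h ≤ lam ∧ lam ≤ 4 / h :=
    fun _ _ hv hPv => mem_Icc_of_mulVec_eq_smul hrayleigh hv hPv
  have hsymm : P.IsSymm := by
    rw [hP', IsSymm, transpose_smul, transpose_mul, transpose_transpose]
  refine ⟨fun i => ?_, fun i i' hii' => ?_, fun i i' hii' => ?_, hsymm, ?_, heig, ?_⟩
  · rw [hentry, transpose_diffMatrix_mul_self_apply_self]; ring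
  · rw [hentry, transpose_diffMatrix_mul_self_apply_of_abs_sub_eq_one hii']; ring
  · rw [hentry, transpose_diffMatrix_mul_self_apply_of_two_le_abs_sub hii', mul_zero]
  · refine posDef_iff_dotProduct_mulVec.2 ⟨isHermitian_iff_isSymm.2 hsymm, fun v hv => ?_⟩
    rw [star_trivial]
    exact (mul_pos (by positivity) (dotProduct_self_pos_of_ne_zero hv)).trans_le (hrayleigh v).1
  · intro lam mu v w hv hw hPv hPw
    calc lam ≤ 4 / h := (heig lam v hv hPv).2
      _ = 1 / h ^ 2 * (4 * h) := by field_simp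
      _ ≤ 1 / h ^ 2 * mu := by gcongr; exact (heig mu w hw hPw).1

/-- **1D Laplacian (stiffness) matrix.** With `n ≥ 1`, `h = 1/(n+1)`, and
`g_i` the a.e.-derivative of the hat function `φ_i` (equal to `1/h` on `((i−1)h, ih)`,
`−1/h` on `(ih, (i+1)h)`, `0` otherwise; here `i` is represented by `i.val + 1` for
`i : Fin n`), the matrix `P_{i,i'} = ∫₀¹ g_i g_{i'}` has tridiagonal entries `2/h` and
`−1/h`, is symmetric positive definite, all its eigenvalues lie in `[4h, 4/h]`, and hence
its condition number is at most `1/h²`. -/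
theorem stmt1 (n : ℕ) (hn : 1 ≤ n) (h : ℝ) (hh : h = 1 / ((n : ℝ) + 1))
    (g : Fin n → ℝ → ℝ)
    (hg : ∀ (i : Fin n) (x : ℝ),
      g i x = if (i.val : ℝ) * h < x ∧ x < ((i.val : ℝ) + 1) * h then 1 / h
        else if ((i.val : ℝ) + 1) * h < x ∧ x < ((i.val : ℝ) + 2) * h then -(1 / h)
        else 0)
    (P : Matrix (Fin n) (Fin n) ℝ)
    (hP : ∀ i i', P i i' = ∫ x in Set.Icc (0:ℝ) 1, g i x * g i' x) :
    (∀ i, P i i = 2 / h) ∧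
    (∀ i i' : Fin n, |(i.val : ℤ) - (i'.val : ℤ)| = 1 → P i i' = -(1 / h)) ∧
    (∀ i i' : Fin n, 2 ≤ |(i.val : ℤ) - (i'.val : ℤ)| → P i i' = 0) ∧
    P.IsSymm ∧ P.PosDef ∧
    (∀ (lam : ℝ) (v : Fin n → ℝ), v ≠ 0 → P.mulVec v = lam • v →
      4 * h ≤ lam ∧ lam ≤ 4 / h) ∧
    (∀ (lam mu : ℝ) (v w : Fin n → ℝ), v ≠ 0 → w ≠ 0 →
      P.mulVec v = lam • v → P.mulVec w = mu • w → lam ≤ (1 / h ^ 2) * mu) :=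
  stmt1_general n h hh g hg P hP
end

section
/- Let n ≥ 1 be an integer and h = 1/(n+1). The 3D Laplacian matrix P⁽³⁾ satisfies P⁽³⁾ = P ⊗ M ⊗ M + M ⊗ P ⊗ M + M ⊗ M ⊗ P (Kronecker products under the identification of {1,…,n}³ with indices of ℝ^{n³}), where M is the 1D mass matrix and P is the 1D Laplacian matrix. Consequently every eigenvalue λ of P⁽³⁾ satisfies (4/3)h³ ≤ λ ≤ 12h, so the condition number of P⁽³⁾ is at most 9/h². -/
/-!
Separating variables in the integrand and applying Fubini gives the Kronecker formula for `P⁽³⁾`.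
Rescaling every 1D integral to the reference tent `max 0 (1 - |u|)` on `[-1, 1]` shows
`M = h (⅔ I + ⅙ A)` and `P = h⁻¹ (2 I - A)`, where `A` is the adjacency matrix of the path on `n`
vertices. Padding `v` with zero boundary values, `vᵀ (2 I ± A) v = ∑ (v_{k+1} ± v_k)²`; hence
`2 I + A ≥ 0`, and a discrete Poincaré inequality gives `2 I - A ≥ 4 h² I`. So `h/3 ≤ M ≤ h` and
`4h ≤ P ≤ 4/h` in the Loewner order, and since the Kronecker product is monotone on positive
semidefinite matrices, `(4/3) h³ ≤ P⁽³⁾ ≤ 12 h`. The eigenvalue bounds follow from Rayleigh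
quotients.
-/

open MeasureTheory Matrix SimpleGraph
open scoped Kronecker MatrixOrder ComplexOrder

namespace Matrix

section Loewner

variable {𝕜 m n : Type*} [RCLike 𝕜]

theorem kronecker_le_kronecker [Finite m] [Finite n] {A A' : Matrix m m 𝕜} {B B' : Matrix n n 𝕜}
    (hA : 0 ≤ A) (hAA' : A ≤ A') (hB : 0 ≤ B) (hBB' : B ≤ B') : A ⊗ₖ B ≤ A' ⊗ₖ B' := by
  have hsplit : A' ⊗ₖ B' - A ⊗ₖ B = (A' - A) ⊗ₖ B' + A ⊗ₖ (B' - B) := by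
    ext; simp only [sub_apply, add_apply, kroneckerMap_apply]; ring
  rw [le_iff, hsplit]
  exact (hAA'.kronecker (hB.trans hBB').posSemidef).add (hA.posSemidef.kronecker hBB')

theorem kronecker_nonneg [Finite m] [Finite n] {A : Matrix m m 𝕜} {B : Matrix n n 𝕜} (hA : 0 ≤ A)
    (hB : 0 ≤ B) : 0 ≤ A ⊗ₖ B :=
  (hA.posSemidef.kronecker hB.posSemidef).nonneg

variable [DecidableEq m] [DecidableEq n]

theorem smul_one_nonneg {a : ℝ} (ha : 0 ≤ a) : 0 ≤ (a • 1 : Matrix m m 𝕜) :=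
  (PosSemidef.one.smul ha).nonneg

theorem smul_one_le_smul_one {a b : ℝ} (hab : a ≤ b) : (a • 1 : Matrix m m 𝕜) ≤ b • 1 := by
  rw [le_iff, ← sub_smul]
  exact (smul_one_nonneg (sub_nonneg.2 hab)).posSemidef

theorem smul_one_kronecker_smul_one (a b : ℝ) :
    (a • 1 : Matrix m m 𝕜) ⊗ₖ (b • 1 : Matrix n n 𝕜) = (a * b) • 1 := by
  rw [smul_kronecker, kronecker_smul, one_kronecker_one, smul_smul]

variable [Finite m] [Finite n]

theorem smul_one_le_kronecker {A : Matrix m m 𝕜} {B : Matrix n n 𝕜} {a b : ℝ} (ha : 0 ≤ a)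
    (hb : 0 ≤ b) (hA : a • 1 ≤ A) (hB : b • 1 ≤ B) : (a * b) • 1 ≤ A ⊗ₖ B := by
  rw [← smul_one_kronecker_smul_one]
  exact kronecker_le_kronecker (smul_one_nonneg ha) hA (smul_one_nonneg hb) hB

theorem kronecker_le_smul_one {A : Matrix m m 𝕜} {B : Matrix n n 𝕜} {a b : ℝ} (hA₀ : 0 ≤ A)
    (hB₀ : 0 ≤ B) (hA : A ≤ a • 1) (hB : B ≤ b • 1) : A ⊗ₖ B ≤ (a * b) • 1 := by
  rw [← smul_one_kronecker_smul_one]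
  exact kronecker_le_kronecker hA₀ hA hB₀ hB

theorem smul_one_le_kroneckerSum₃ {A B : Matrix m m 𝕜} {a b : ℝ} (ha : 0 ≤ a) (hb : 0 ≤ b)
    (hA : a • 1 ≤ A) (hB : b • 1 ≤ B) :
    (3 * a * b ^ 2) • 1 ≤ A ⊗ₖ (B ⊗ₖ B) + B ⊗ₖ (A ⊗ₖ B) + B ⊗ₖ (B ⊗ₖ A) := by
  have hsum := add_le_add (add_le_add
    (smul_one_le_kronecker ha (mul_nonneg hb hb) hA (smul_one_le_kronecker hb hb hB hB))
    (smul_one_le_kronecker hb (mul_nonneg ha hb) hB (smul_one_le_kronecker ha hb hA hB)))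
    (smul_one_le_kronecker hb (mul_nonneg hb ha) hB (smul_one_le_kronecker hb ha hB hA))
  convert hsum using 1
  simp only [← add_smul]; ring_nf

theorem kroneckerSum₃_le_smul_one {A B : Matrix m m 𝕜} {a b : ℝ} (hA₀ : 0 ≤ A) (hB₀ : 0 ≤ B)
    (hA : A ≤ a • 1) (hB : B ≤ b • 1) :
    A ⊗ₖ (B ⊗ₖ B) + B ⊗ₖ (A ⊗ₖ B) + B ⊗ₖ (B ⊗ₖ A) ≤ (3 * a * b ^ 2) • 1 := by
  have hsum := add_le_add (add_le_add
    (kronecker_le_smul_one hA₀ (kronecker_nonneg hB₀ hB₀) hA (kronecker_le_smul_one hB₀ hB₀ hB hB))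
    (kronecker_le_smul_one hB₀ (kronecker_nonneg hA₀ hB₀) hB (kronecker_le_smul_one hA₀ hB₀ hA hB)))
    (kronecker_le_smul_one hB₀ (kronecker_nonneg hB₀ hA₀) hB (kronecker_le_smul_one hB₀ hA₀ hB hA))
  convert hsum using 1
  simp only [← add_smul]; ring_nf

end Loewner

section RealQuadraticForm

variable {ι : Type*} [Fintype ι]

theorem le_of_forall_dotProduct_mulVec_le {A B : Matrix ι ι ℝ} (hA : A.IsHermitian)
    (hB : B.IsHermitian) (hAB : ∀ x, x ⬝ᵥ A *ᵥ x ≤ x ⬝ᵥ B *ᵥ x) : A ≤ B :=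
  PosSemidef.of_dotProduct_mulVec_nonneg (hB.sub hA) fun x => by
    simpa [sub_mulVec, dotProduct_sub] using hAB x

theorem dotProduct_mulVec_le_of_le {A B : Matrix ι ι ℝ} (hAB : A ≤ B) (x : ι → ℝ) :
    x ⬝ᵥ A *ᵥ x ≤ x ⬝ᵥ B *ᵥ x := by
  simpa [sub_mulVec, dotProduct_sub] using hAB.dotProduct_mulVec_nonneg x

variable [DecidableEq ι] {A : Matrix ι ι ℝ} {c μ : ℝ} {v : ι → ℝ}

theorem le_of_smul_one_le_of_mulVec_eq_smul (hA : c • 1 ≤ A) (hv : v ≠ 0)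
    (hAv : A *ᵥ v = μ • v) : c ≤ μ := by
  have hle := dotProduct_mulVec_le_of_le hA v
  rw [hAv, smul_mulVec, one_mulVec, dotProduct_smul, dotProduct_smul, smul_eq_mul,
    smul_eq_mul] at hle
  exact le_of_mul_le_mul_right hle (by simpa using dotProduct_star_self_pos_iff.2 hv)

theorem le_of_le_smul_one_of_mulVec_eq_smul (hA : A ≤ c • 1) (hv : v ≠ 0)
    (hAv : A *ᵥ v = μ • v) : μ ≤ c := by
  have hle := dotProduct_mulVec_le_of_le hA v
  rw [hAv, smul_mulVec, one_mulVec, dotProduct_smul, dotProduct_smul, smul_eq_mul,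
    smul_eq_mul] at hle
  exact le_of_mul_le_mul_right hle (by simpa using dotProduct_star_self_pos_iff.2 hv)

end RealQuadraticForm

end Matrix

section Poincare

open Finset

-- `w k` is the sum of the increments before `k`, and minus the sum of those after `k`.
theorem four_mul_sq_le_card_mul_sum_sq_sub (w : ℕ → ℝ) {m k : ℕ} (hk : k ≤ m) (h0 : w 0 = 0)
    (hm : w m = 0) : 4 * w k ^ 2 ≤ m * ∑ j ∈ range m, (w (j + 1) - w j) ^ 2 := by
  have hhead : ∑ j ∈ range k, (w (j + 1) - w j) = w k := by rw [sum_range_sub, h0, sub_zero]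
  have htail : ∑ j ∈ Ico k m, (w (j + 1) - w j) = -w k := by
    have := sum_range_add_sum_Ico (fun j => w (j + 1) - w j) hk
    rw [hhead, sum_range_sub, hm, h0] at this
    linarith
  have habs : 2 * |w k| ≤ ∑ j ∈ range m, |w (j + 1) - w j| := by
    calc 2 * |w k| = |∑ j ∈ range k, (w (j + 1) - w j)| + |∑ j ∈ Ico k m, (w (j + 1) - w j)| := by
          rw [hhead, htail, abs_neg, two_mul]
      _ ≤ ∑ j ∈ range m, |w (j + 1) - w j| := by
          rw [← sum_range_add_sum_Ico _ hk]
          exact add_le_add (abs_sum_le_sum_abs _ _) (abs_sum_le_sum_abs _ _)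
  calc 4 * w k ^ 2 = (2 * |w k|) ^ 2 := by rw [mul_pow, sq_abs]; norm_num
    _ ≤ (∑ j ∈ range m, |w (j + 1) - w j|) ^ 2 := by gcongr
    _ ≤ m * ∑ j ∈ range m, (w (j + 1) - w j) ^ 2 := by
      simpa only [card_range, sq_abs] using
        sq_sum_le_card_mul_sum_sq (s := range m) (f := fun j => |w (j + 1) - w j|)

theorem four_mul_sum_sq_le_sq_mul_sum_sq_sub (w : ℕ → ℝ) (m : ℕ) (h0 : w 0 = 0) (hm : w m = 0) :
    4 * ∑ k ∈ range m, w k ^ 2 ≤ (m : ℝ) ^ 2 * ∑ j ∈ range m, (w (j + 1) - w j) ^ 2 := by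
  calc 4 * ∑ k ∈ range m, w k ^ 2
      ≤ ∑ _k ∈ range m, m * ∑ j ∈ range m, (w (j + 1) - w j) ^ 2 := by
        rw [mul_sum]
        exact sum_le_sum fun k hk =>
          four_mul_sq_le_card_mul_sum_sq_sub w (mem_range.1 hk).le h0 hm
    _ = (m : ℝ) ^ 2 * ∑ j ∈ range m, (w (j + 1) - w j) ^ 2 := by
        rw [sum_const, card_range, nsmul_eq_mul]; ring

end Poincare

section DirichletPath

open Finset

variable {n : ℕ}

-- `v` moved to the indices `1, …, n`, with the Dirichlet boundary values `0` at `0` and `n + 1`.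
def padZero (v : Fin n → ℝ) (k : ℕ) : ℝ :=
  if hk : 0 < k ∧ k ≤ n then v ⟨k - 1, by omega⟩ else 0

@[simp] theorem padZero_zero (v : Fin n → ℝ) : padZero v 0 = 0 := by simp [padZero]

@[simp] theorem padZero_val_add_one (v : Fin n → ℝ) (i : Fin n) : padZero v (i + 1) = v i := by
  simp [padZero, Nat.succ_le_of_lt i.is_lt]

theorem padZero_of_lt (v : Fin n → ℝ) {k : ℕ} (hk : n < k) : padZero v k = 0 := by
  simp [padZero]; omega

theorem sum_ite_val_add_one_eq_padZero (v : Fin n → ℝ) (k : ℕ) :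
    ∑ j : Fin n, (if (j : ℕ) + 1 = k then v j else 0) = padZero v k := by
  by_cases hk : ∃ i : Fin n, (i : ℕ) + 1 = k
  · obtain ⟨i, rfl⟩ := hk
    simp [Fin.val_inj]
  · push Not at hk
    rw [sum_eq_zero fun j _ => if_neg (hk j), padZero, dif_neg]
    exact fun ⟨hk0, hkn⟩ => hk ⟨k - 1, by omega⟩ (by simp only; omega)

theorem sum_range_padZero_sq (v : Fin n → ℝ) :
    ∑ k ∈ range (n + 1), padZero v k ^ 2 = v ⬝ᵥ v := by
  rw [sum_range_succ', ← Fin.sum_univ_eq_sum_range (fun k => padZero v (k + 1) ^ 2)]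
  simp [dotProduct, sq]

theorem sum_range_padZero_succ_sq (v : Fin n → ℝ) :
    ∑ k ∈ range (n + 1), padZero v (k + 1) ^ 2 = v ⬝ᵥ v := by
  rw [sum_range_succ, ← Fin.sum_univ_eq_sum_range (fun k => padZero v (k + 1) ^ 2),
    padZero_of_lt v (Nat.lt_succ_self n)]
  simp [dotProduct, sq]

instance : DecidableRel (pathGraph n).Adj := fun _ _ => decidable_of_iff' _ pathGraph_adj

theorem pathGraph_adjMatrix_mulVec_apply (v : Fin n → ℝ) (i : Fin n) :
    ((pathGraph n).adjMatrix ℝ *ᵥ v) i = padZero v i + padZero v (i + 2) := by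
  have hsplit : ∀ j : Fin n, (pathGraph n).adjMatrix ℝ i j * v j =
      (if (j : ℕ) + 1 = i then v j else 0) + (if (j : ℕ) + 1 = i + 2 then v j else 0) := by
    intro j
    have hright : (j : ℕ) + 1 = i + 2 ↔ (i : ℕ) + 1 = j := by omega
    simp only [adjMatrix_apply, pathGraph_adj, hright]
    split_ifs <;> first | (exfalso; omega) | ring
  simp only [mulVec, dotProduct, hsplit, sum_add_distrib, sum_ite_val_add_one_eq_padZero]

theorem dotProduct_pathGraph_adjMatrix_mulVec (v : Fin n → ℝ) :
    v ⬝ᵥ ((pathGraph n).adjMatrix ℝ *ᵥ v) =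
      2 * ∑ k ∈ range (n + 1), padZero v k * padZero v (k + 1) := by
  have hleft : ∑ k ∈ range (n + 1), padZero v k * padZero v (k + 1) =
      ∑ k ∈ range n, padZero v k * padZero v (k + 1) := by
    rw [sum_range_succ, padZero_of_lt v n.lt_succ_self, mul_zero, add_zero]
  have hright : ∑ k ∈ range (n + 1), padZero v k * padZero v (k + 1) =
      ∑ k ∈ range n, padZero v (k + 1) * padZero v (k + 2) := by
    rw [sum_range_succ', padZero_zero, zero_mul, add_zero]
  calc v ⬝ᵥ ((pathGraph n).adjMatrix ℝ *ᵥ v)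
      = ∑ k ∈ range n, padZero v (k + 1) * (padZero v k + padZero v (k + 2)) := by
        simp only [dotProduct, pathGraph_adjMatrix_mulVec_apply, ← padZero_val_add_one v]
        exact Fin.sum_univ_eq_sum_range
          (fun k => padZero v (k + 1) * (padZero v k + padZero v (k + 2))) n
    _ = 2 * ∑ k ∈ range (n + 1), padZero v k * padZero v (k + 1) := by
        rw [two_mul]
        nth_rewrite 1 [hleft]
        rw [hright, ← sum_add_distrib]
        exact sum_congr rfl fun k _ => by ring

theorem dotProduct_two_smul_one_add_pathGraph_adjMatrix_mulVec (v : Fin n → ℝ) :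
    v ⬝ᵥ (((2 : ℝ) • 1 + (pathGraph n).adjMatrix ℝ) *ᵥ v) =
      ∑ k ∈ range (n + 1), (padZero v (k + 1) + padZero v k) ^ 2 := by
  have hsq : ∀ k, (padZero v (k + 1) + padZero v k) ^ 2 =
      padZero v (k + 1) ^ 2 + padZero v k ^ 2 + 2 * (padZero v k * padZero v (k + 1)) :=
    fun k => by ring
  simp only [hsq, sum_add_distrib, ← mul_sum, sum_range_padZero_sq, sum_range_padZero_succ_sq,
    add_mulVec, smul_mulVec, one_mulVec, dotProduct_add, dotProduct_smul,
    dotProduct_pathGraph_adjMatrix_mulVec, smul_eq_mul]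
  ring

theorem dotProduct_two_smul_one_sub_pathGraph_adjMatrix_mulVec (v : Fin n → ℝ) :
    v ⬝ᵥ (((2 : ℝ) • 1 - (pathGraph n).adjMatrix ℝ) *ᵥ v) =
      ∑ k ∈ range (n + 1), (padZero v (k + 1) - padZero v k) ^ 2 := by
  have hsq : ∀ k, (padZero v (k + 1) - padZero v k) ^ 2 =
      padZero v (k + 1) ^ 2 + padZero v k ^ 2 - 2 * (padZero v k * padZero v (k + 1)) :=
    fun k => by ring
  simp only [hsq, sum_add_distrib, sum_sub_distrib, ← mul_sum, sum_range_padZero_sq,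
    sum_range_padZero_succ_sq, sub_mulVec, smul_mulVec, one_mulVec, dotProduct_sub,
    dotProduct_smul, dotProduct_pathGraph_adjMatrix_mulVec, smul_eq_mul]
  ring

theorem zero_le_two_smul_one_add_pathGraph_adjMatrix :
    0 ≤ (2 : ℝ) • (1 : Matrix (Fin n) (Fin n) ℝ) + (pathGraph n).adjMatrix ℝ :=
  le_of_forall_dotProduct_mulVec_le isHermitian_zero
    ((isHermitian_one.smul (.all _)).add (isHermitian_adjMatrix ℝ _)) fun v => by
      rw [dotProduct_two_smul_one_add_pathGraph_adjMatrix_mulVec, zero_mulVec, dotProduct_zero]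
      positivity

theorem smul_one_le_two_smul_one_sub_pathGraph_adjMatrix :
    (4 / ((n : ℝ) + 1) ^ 2) • (1 : Matrix (Fin n) (Fin n) ℝ) ≤
      (2 : ℝ) • 1 - (pathGraph n).adjMatrix ℝ := by
  refine le_of_forall_dotProduct_mulVec_le (isHermitian_one.smul (.all _))
    ((isHermitian_one.smul (.all _)).sub (isHermitian_adjMatrix ℝ _)) fun v => ?_
  have hpoincare := four_mul_sum_sq_le_sq_mul_sum_sq_sub (padZero v) (n + 1) (padZero_zero v)
    (padZero_of_lt v (Nat.lt_succ_self n))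
  rw [dotProduct_two_smul_one_sub_pathGraph_adjMatrix_mulVec, smul_mulVec, one_mulVec,
    dotProduct_smul, smul_eq_mul, ← sum_range_padZero_sq, div_mul_eq_mul_div,
    div_le_iff₀ (by positivity)]
  push_cast at hpoincare
  linarith

theorem zero_le_two_smul_one_sub_pathGraph_adjMatrix :
    0 ≤ (2 : ℝ) • (1 : Matrix (Fin n) (Fin n) ℝ) - (pathGraph n).adjMatrix ℝ :=
  (smul_one_nonneg (by positivity)).trans smul_one_le_two_smul_one_sub_pathGraph_adjMatrix

end DirichletPath

namespace MeasureTheory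

theorem integral_eq_mul_measureReal_of_eqOn {X : Type*} [MeasurableSpace X] {μ : Measure X}
    {F : X → ℝ} {s : Set X} {c : ℝ} (hs : MeasurableSet s) (hzero : ∀ x ∉ s, F x = 0)
    (hF : Set.EqOn F (fun _ => c) s) : ∫ x, F x ∂μ = c * μ.real s := by
  rw [← setIntegral_eq_integral_of_forall_compl_eq_zero hzero, setIntegral_congr_fun hs hF,
    setIntegral_const, smul_eq_mul, mul_comm]

variable {α β γ 𝕜 : Type*} [MeasureSpace α] [MeasureSpace β] [MeasureSpace γ]
  [SFinite (volume : Measure α)] [SFinite (volume : Measure β)] [SFinite (volume : Measure γ)]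
  [RCLike 𝕜] {s : Set α} {t : Set β} {u : Set γ}

theorem volume_restrict_prod_prod (s : Set α) (t : Set β) (u : Set γ) :
    (volume.restrict s).prod ((volume.restrict t).prod (volume.restrict u)) =
      volume.restrict (s ×ˢ t ×ˢ u) := by
  rw [Measure.prod_restrict, ← Measure.volume_eq_prod, Measure.prod_restrict,
    ← Measure.volume_eq_prod]

theorem setIntegral_prod_prod_mul (F : α → 𝕜) (G : β → 𝕜) (K : γ → 𝕜) :
    ∫ p in s ×ˢ t ×ˢ u, F p.1 * G p.2.1 * K p.2.2 =
      (∫ x in s, F x) * (∫ y in t, G y) * ∫ z in u, K z := by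
  simp_rw [mul_assoc]
  rw [← volume_restrict_prod_prod, integral_prod_mul F (fun q : β × γ => G q.1 * K q.2),
    integral_prod_mul G K]

theorem IntegrableOn.prod_prod_mul {F : α → 𝕜} {G : β → 𝕜} {K : γ → 𝕜}
    (hF : IntegrableOn F s) (hG : IntegrableOn G t) (hK : IntegrableOn K u) :
    IntegrableOn (fun p : α × β × γ => F p.1 * G p.2.1 * K p.2.2) (s ×ˢ t ×ˢ u) := by
  simp_rw [mul_assoc]
  rw [IntegrableOn, ← volume_restrict_prod_prod]
  exact hF.mul_prod (hG.mul_prod hK)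

end MeasureTheory

theorem setIntegral_tensor_gradient_inner {ι : Type*} {s : Set ℝ} (φ g : ι → ℝ → ℝ)
    (hφ : ∀ a b, IntegrableOn (fun x => φ a x * φ b x) s)
    (hg : ∀ a b, IntegrableOn (fun x => g a x * g b x) s) (i j k i' j' k' : ι) :
    ∫ p in s ×ˢ s ×ˢ s,
        (g i p.1 * φ j p.2.1 * φ k p.2.2) * (g i' p.1 * φ j' p.2.1 * φ k' p.2.2)
        + (φ i p.1 * g j p.2.1 * φ k p.2.2) * (φ i' p.1 * g j' p.2.1 * φ k' p.2.2)
        + (φ i p.1 * φ j p.2.1 * g k p.2.2) * (φ i' p.1 * φ j' p.2.1 * g k' p.2.2) =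
      (∫ x in s, g i x * g i' x) * (∫ y in s, φ j y * φ j' y) * (∫ z in s, φ k z * φ k' z)
      + (∫ x in s, φ i x * φ i' x) * (∫ y in s, g j y * g j' y) * (∫ z in s, φ k z * φ k' z)
      + (∫ x in s, φ i x * φ i' x) * (∫ y in s, φ j y * φ j' y) * (∫ z in s, g k z * g k' z) := by
  have h₁ := (hg i i').prod_prod_mul (hφ j j') (hφ k k')
  have h₂ := (hφ i i').prod_prod_mul (hg j j') (hφ k k')
  have h₃ := (hφ i i').prod_prod_mul (hφ j j') (hg k k')
  rw [← setIntegral_prod_prod_mul (fun x => g i x * g i' x) (fun y => φ j y * φ j' y)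
      (fun z => φ k z * φ k' z),
    ← setIntegral_prod_prod_mul (fun x => φ i x * φ i' x) (fun y => g j y * g j' y)
      (fun z => φ k z * φ k' z),
    ← setIntegral_prod_prod_mul (fun x => φ i x * φ i' x) (fun y => φ j y * φ j' y)
      (fun z => g k z * g k' z),
    ← integral_add h₁ h₂, ← integral_add _ h₃]
  · congr with p
    ring
  · exact h₁.add h₂

section ReferenceProfile

open Set

variable {f : ℝ → ℝ}

theorem integral_mul_comp_sub_eq_zero (hf : ∀ u, 1 ≤ |u| → f u = 0) {d : ℝ} (hd : 2 ≤ |d|) :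
    ∫ u, f u * f (u - d) = 0 := by
  have hzero : ∀ u, f u * f (u - d) = 0 := fun u => by
    by_cases hu : 1 ≤ |u|
    · rw [hf u hu, zero_mul]
    · have := abs_sub_abs_le_abs_sub d u
      rw [hf (u - d) (by rw [abs_sub_comm]; linarith), mul_zero]
  simp [hzero]

theorem integral_mul_comp_add_one (f : ℝ → ℝ) :
    ∫ u, f u * f (u + 1) = ∫ u, f u * f (u - 1) := by
  rw [← integral_sub_right_eq_self (fun u => f u * f (u + 1)) 1]
  simp only [sub_add_cancel, mul_comm]

theorem integral_mul_comp_sub_eq_one_add_adjMatrix (hf : ∀ u, 1 ≤ |u| → f u = 0) {n : ℕ}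
    (i j : Fin n) :
    ∫ u, f u * f (u - ((j : ℝ) - i)) =
      (∫ u, f u ^ 2) * (1 : Matrix (Fin n) (Fin n) ℝ) i j
        + (∫ u, f u * f (u - 1)) * (pathGraph n).adjMatrix ℝ i j := by
  simp only [adjMatrix_apply, pathGraph_adj]
  rcases (by omega : i = j ∨ (i : ℕ) + 1 = j ∨ (j : ℕ) + 1 = i ∨
      ((i : ℕ) + 2 ≤ j ∨ (j : ℕ) + 2 ≤ i)) with rfl | h | h | h
  · simp [sq]
  · have hd : (j : ℝ) - i = 1 := by rw [← h]; push_cast; ring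
    rw [hd, one_apply_ne (by omega), if_pos (Or.inl h)]; ring
  · have hd : (j : ℝ) - i = -1 := by rw [← h]; push_cast; ring
    rw [hd, one_apply_ne (by omega), if_pos (Or.inr h)]
    simp only [sub_neg_eq_add, integral_mul_comp_add_one]; ring
  · have hd : 2 ≤ |(j : ℝ) - i| := by
      rw [le_abs]
      rcases h with h | h
      · left; have : ((i : ℕ) : ℝ) + 2 ≤ j := by exact_mod_cast h
        linarith
      · right; have : ((j : ℕ) : ℝ) + 2 ≤ i := by exact_mod_cast h
        linarith
    rw [integral_mul_comp_sub_eq_zero hf hd, one_apply_ne (by omega), if_neg (by omega)]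
    ring

theorem setIntegral_Icc_comp_div_sub (hf : ∀ u, 1 ≤ |u| → f u = 0) {h c : ℝ} (hh : 0 < h)
    (hc : 1 ≤ c) (hch : (c + 1) * h ≤ 1) : ∫ x in Icc 0 1, f (x / h - c) = h * ∫ u, f u := by
  rw [setIntegral_eq_integral_of_forall_compl_eq_zero fun x hx => hf _ ?_,
    Measure.integral_comp_div (fun y => f (y - c)), integral_sub_right_eq_self,
    abs_of_pos hh, smul_eq_mul]
  rw [Set.mem_Icc, not_and_or, not_le, not_le] at hx
  rcases hx with hx | hx
  · have : x / h < 0 := div_neg_of_neg_of_pos hx hh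
    exact le_abs.2 (Or.inr (by linarith))
  · have : c + 1 < x / h := by rw [lt_div_iff₀ hh]; linarith
    exact le_abs.2 (Or.inl (by linarith))

theorem setIntegral_Icc_mul_eq_one_add_adjMatrix (hf : ∀ u, 1 ≤ |u| → f u = 0) {n : ℕ} {h : ℝ}
    (hh : 0 < h) (hnh : (n + 1) * h ≤ 1) (i j : Fin n) :
    ∫ x in Icc 0 1, f (x / h - (i + 1)) * f (x / h - (j + 1)) =
      h * ((∫ u, f u ^ 2) * (1 : Matrix (Fin n) (Fin n) ℝ) i j
        + (∫ u, f u * f (u - 1)) * (pathGraph n).adjMatrix ℝ i j) := by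
  have hshift : ∀ x, x / h - ((j : ℝ) + 1) = x / h - (i + 1) - ((j : ℝ) - i) := fun x => by ring
  have hi : ((i : ℝ) + 1 + 1) * h ≤ 1 := by
    have : (i : ℝ) + 1 + 1 ≤ n + 1 := by have := i.is_lt; norm_cast; omega
    nlinarith
  simp_rw [hshift]
  rw [setIntegral_Icc_comp_div_sub (f := fun u => f u * f (u - ((j : ℝ) - i)))
      (fun u hu => by simp only [hf u hu, zero_mul]) hh
      (le_add_of_nonneg_left (Nat.cast_nonneg _)) hi, integral_mul_comp_sub_eq_one_add_adjMatrix hf]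

end ReferenceProfile

namespace HatBasis

open Set

noncomputable section

def tent (u : ℝ) : ℝ := max 0 (1 - |u|)

def tentDeriv (u : ℝ) : ℝ := if -1 < u ∧ u < 0 then 1 else if 0 < u ∧ u < 1 then -1 else 0

-- `hat h i` is the paper's `φ_{i+1}` (Lean indices are `0`-based), `hatDeriv h i` is `g_{i+1}`.
def hat (h : ℝ) (i : ℕ) (x : ℝ) : ℝ := tent (x / h - (i + 1))

def hatDeriv (h : ℝ) (i : ℕ) (x : ℝ) : ℝ := h⁻¹ * tentDeriv (x / h - (i + 1))

def massMatrix (n : ℕ) (h : ℝ) : Matrix (Fin n) (Fin n) ℝ :=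
  Matrix.of fun i j => ∫ x in Icc 0 1, hat h i x * hat h j x

def stiffnessMatrix (n : ℕ) (h : ℝ) : Matrix (Fin n) (Fin n) ℝ :=
  Matrix.of fun i j => ∫ x in Icc 0 1, hatDeriv h i x * hatDeriv h j x

end

theorem tent_eq_zero {u : ℝ} (hu : 1 ≤ |u|) : tent u = 0 := max_eq_left (by linarith)

theorem tent_of_mem_Icc_neg {u : ℝ} (hu : u ∈ Icc (-1) 0) : tent u = 1 + u := by
  rw [tent, abs_of_nonpos hu.2, max_eq_right (by linarith [hu.1])]; ring

theorem tent_of_mem_Icc {u : ℝ} (hu : u ∈ Icc 0 1) : tent u = 1 - u := by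
  rw [tent, abs_of_nonneg hu.1, max_eq_right (by linarith [hu.2])]

theorem continuous_tent : Continuous tent := by unfold tent; fun_prop

theorem tentDeriv_eq_zero {u : ℝ} (hu : 1 ≤ |u|) : tentDeriv u = 0 := by
  rcases le_abs'.1 hu with hu | hu <;>
    simp [tentDeriv, show ¬(-1 < u ∧ u < 0) by intro h; linarith [h.1, h.2],
      show ¬(0 < u ∧ u < 1) by intro h; linarith [h.1, h.2]]

theorem tentDeriv_of_mem_Ioo_neg {u : ℝ} (hu : u ∈ Ioo (-1) 0) : tentDeriv u = 1 := if_pos hu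

theorem tentDeriv_of_mem_Ioo {u : ℝ} (hu : u ∈ Ioo 0 1) : tentDeriv u = -1 := by
  unfold tentDeriv
  rw [if_neg fun h => by linarith [h.2, hu.1]]
  exact if_pos hu

theorem measurable_tentDeriv : Measurable tentDeriv :=
  Measurable.ite measurableSet_Ioo measurable_const
    (Measurable.ite measurableSet_Ioo measurable_const measurable_const)

theorem abs_tentDeriv_le (u : ℝ) : |tentDeriv u| ≤ 1 := by
  unfold tentDeriv; split_ifs <;> norm_num

theorem integral_tent_sq : ∫ u, tent u ^ 2 = 2 / 3 := by
  have hsupp : Function.support (fun u => tent u ^ 2) ⊆ Ioc (-1) 1 :=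
    Function.support_subset_iff'.2 fun u hu => by
      rw [tent_eq_zero, zero_pow two_ne_zero]
      rw [Set.mem_Ioc, not_and_or, not_lt, not_le] at hu
      rcases hu with hu | hu
      · exact le_abs'.2 (Or.inl hu)
      · exact le_abs'.2 (Or.inr hu.le)
  have hint : ∀ a b : ℝ, IntervalIntegrable (fun u => tent u ^ 2) volume a b :=
    fun a b => (continuous_tent.pow 2).intervalIntegrable a b
  rw [← intervalIntegral.integral_eq_integral_of_support_subset hsupp,
    ← intervalIntegral.integral_add_adjacent_intervals (hint (-1) 0) (hint 0 1),
    intervalIntegral.integral_congr (a := -1) (b := 0) (g := fun u => (1 + u) ^ 2) fun u hu => by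
      rw [uIcc_of_le (by norm_num)] at hu; simp only [tent_of_mem_Icc_neg hu],
    intervalIntegral.integral_congr (a := 0) (b := 1) (g := fun u => (1 - u) ^ 2) fun u hu => by
      rw [uIcc_of_le (by norm_num)] at hu; simp only [tent_of_mem_Icc hu],
    intervalIntegral.integral_comp_add_left (fun x => x ^ 2),
    intervalIntegral.integral_comp_sub_left (fun x => x ^ 2)]
  norm_num

theorem integral_tent_mul_tent_sub_one : ∫ u, tent u * tent (u - 1) = 1 / 6 := by
  have hsupp : Function.support (fun u => tent u * tent (u - 1)) ⊆ Ioc 0 1 :=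
    Function.support_subset_iff'.2 fun u hu => by
      rw [Set.mem_Ioc, not_and_or, not_lt, not_le] at hu
      rcases hu with hu | hu
      · rw [tent_eq_zero (u := u - 1) (le_abs'.2 (Or.inl (by linarith))), mul_zero]
      · rw [tent_eq_zero (le_abs'.2 (Or.inr hu.le)), zero_mul]
  rw [← intervalIntegral.integral_eq_integral_of_support_subset hsupp,
    intervalIntegral.integral_congr (g := fun u => u - u ^ 2) fun u hu => by
      rw [uIcc_of_le (by norm_num)] at hu
      simp only [tent_of_mem_Icc hu, tent_of_mem_Icc_neg (u := u - 1)
        ⟨by linarith [hu.1], by linarith [hu.2]⟩]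
      ring,
    intervalIntegral.integral_sub intervalIntegral.intervalIntegrable_id
      (intervalIntegral.intervalIntegrable_pow 2)]
  norm_num

theorem integral_tentDeriv_sq : ∫ u, tentDeriv u ^ 2 = 2 := by
  have hdisj : Disjoint (Ioo (-1 : ℝ) 0) (Ioo 0 1) := Ioo_disjoint_Ioo.2 (by norm_num)
  rw [integral_eq_mul_measureReal_of_eqOn (c := 1) (measurableSet_Ioo.union measurableSet_Ioo),
    measureReal_union hdisj measurableSet_Ioo measure_Ioo_lt_top.ne measure_Ioo_lt_top.ne,
    Real.volume_real_Ioo_of_le (by norm_num), Real.volume_real_Ioo_of_le (by norm_num)]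
  · norm_num
  · intro u hu
    unfold tentDeriv
    rw [if_neg (c := -1 < u ∧ u < 0) fun h => hu (Or.inl h),
      if_neg (c := 0 < u ∧ u < 1) fun h => hu (Or.inr h), sq, mul_zero]
  · rintro u (hu | hu)
    · simp [tentDeriv_of_mem_Ioo_neg hu]
    · simp [tentDeriv_of_mem_Ioo hu]

theorem integral_tentDeriv_mul_tentDeriv_sub_one :
    ∫ u, tentDeriv u * tentDeriv (u - 1) = -1 := by
  rw [integral_eq_mul_measureReal_of_eqOn (c := -1) (measurableSet_Ioo (a := 0) (b := 1)),
    Real.volume_real_Ioo_of_le (by norm_num)]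
  · norm_num
  · intro u hu
    by_cases hu₁ : 1 ≤ |u|
    · rw [tentDeriv_eq_zero hu₁, zero_mul]
    · rw [not_le, abs_lt] at hu₁
      have hu₀ : u ≤ 0 := not_lt.1 fun h => hu ⟨h, hu₁.2⟩
      rw [tentDeriv_eq_zero (u := u - 1) (le_abs'.2 (Or.inl (by linarith))), mul_zero]
  · intro u hu
    simp [tentDeriv_of_mem_Ioo hu, tentDeriv_of_mem_Ioo_neg (u := u - 1)
      ⟨by linarith [hu.1], by linarith [hu.2]⟩]

theorem hatDeriv_eq_ite {h : ℝ} (hh : 0 < h) (i : ℕ) (x : ℝ) :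
    hatDeriv h i x = if (i : ℝ) * h < x ∧ x < ((i : ℝ) + 1) * h then 1 / h
      else if ((i : ℝ) + 1) * h < x ∧ x < ((i : ℝ) + 2) * h then -(1 / h) else 0 := by
  obtain ⟨u, rfl⟩ : ∃ u, x = (u + (i + 1)) * h := ⟨x / h - (i + 1), by field_simp; ring⟩
  have hu : (u + (i + 1)) * h / h - (i + 1) = u := by field_simp; ring
  simp only [hatDeriv, tentDeriv, hu, mul_lt_mul_iff_of_pos_right hh,
    show ∀ a : ℝ, a < u + (i + 1) ↔ a - (i + 1) < u from fun a => by
      constructor <;> intro <;> linarith,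
    show ∀ a : ℝ, u + (i + 1) < a ↔ u < a - (i + 1) from fun a => by
      constructor <;> intro <;> linarith]
  norm_num

variable {n : ℕ} {h : ℝ}

theorem massMatrix_eq (hh : 0 < h) (hnh : (n + 1) * h ≤ 1) :
    massMatrix n h = h • ((2 / 3 : ℝ) • 1 + (1 / 6 : ℝ) • (pathGraph n).adjMatrix ℝ) := by
  ext i j
  rw [massMatrix, of_apply]
  unfold hat
  rw [setIntegral_Icc_mul_eq_one_add_adjMatrix (fun _ => tent_eq_zero) hh hnh, integral_tent_sq,
    integral_tent_mul_tent_sub_one]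
  simp only [Matrix.smul_apply, Matrix.add_apply, smul_eq_mul]

theorem stiffnessMatrix_eq (hh : 0 < h) (hnh : (n + 1) * h ≤ 1) :
    stiffnessMatrix n h = h⁻¹ • ((2 : ℝ) • 1 - (pathGraph n).adjMatrix ℝ) := by
  ext i j
  have hsep : ∀ x, hatDeriv h i x * hatDeriv h j x =
      h⁻¹ * h⁻¹ * (tentDeriv (x / h - (i + 1)) * tentDeriv (x / h - (j + 1))) :=
    fun x => by rw [hatDeriv, hatDeriv]; ring
  rw [stiffnessMatrix, of_apply]
  simp_rw [hsep]
  rw [integral_const_mul,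
    setIntegral_Icc_mul_eq_one_add_adjMatrix (fun _ => tentDeriv_eq_zero) hh hnh,
    integral_tentDeriv_sq, integral_tentDeriv_mul_tentDeriv_sub_one]
  simp only [Matrix.smul_apply, Matrix.sub_apply, smul_eq_mul]
  field_simp
  ring

theorem smul_one_le_massMatrix (hh : 0 < h) (hnh : (n + 1) * h ≤ 1) :
    (h / 3) • 1 ≤ massMatrix n h := by
  rw [← sub_nonneg, massMatrix_eq hh hnh, show
    h • ((2 / 3 : ℝ) • 1 + (1 / 6 : ℝ) • (pathGraph n).adjMatrix ℝ) - (h / 3) • 1 =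
      (h / 6) • ((2 : ℝ) • 1 + (pathGraph n).adjMatrix ℝ) by module]
  exact smul_nonneg (by positivity) zero_le_two_smul_one_add_pathGraph_adjMatrix

theorem massMatrix_le_smul_one (hh : 0 < h) (hnh : (n + 1) * h ≤ 1) :
    massMatrix n h ≤ h • 1 := by
  rw [← sub_nonneg, massMatrix_eq hh hnh, show
    h • (1 : Matrix (Fin n) (Fin n) ℝ)
        - h • ((2 / 3 : ℝ) • 1 + (1 / 6 : ℝ) • (pathGraph n).adjMatrix ℝ) =
      (h / 6) • ((2 : ℝ) • 1 - (pathGraph n).adjMatrix ℝ) by module]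
  exact smul_nonneg (by positivity) zero_le_two_smul_one_sub_pathGraph_adjMatrix

theorem smul_one_le_stiffnessMatrix (hh : 0 < h) (hnh : (n + 1) * h ≤ 1) :
    (4 * h) • 1 ≤ stiffnessMatrix n h := by
  have hsq : 4 * h ^ 2 ≤ 4 / ((n : ℝ) + 1) ^ 2 := by
    have h₀ : 0 ≤ (n + 1) * h := by positivity
    rw [le_div_iff₀ (by positivity)]; nlinarith [mul_le_one₀ hnh h₀ hnh]
  rw [← sub_nonneg, stiffnessMatrix_eq hh hnh, show
    h⁻¹ • ((2 : ℝ) • 1 - (pathGraph n).adjMatrix ℝ) - (4 * h) • 1 =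
      h⁻¹ • ((2 : ℝ) • 1 - (pathGraph n).adjMatrix ℝ - (4 * h ^ 2) • 1) by
    rw [smul_sub _ _ ((4 * h ^ 2) • (1 : Matrix (Fin n) (Fin n) ℝ)), smul_smul]
    congr 2; field_simp]
  exact smul_nonneg (by positivity) (sub_nonneg.2
    ((smul_one_le_smul_one hsq).trans smul_one_le_two_smul_one_sub_pathGraph_adjMatrix))

theorem stiffnessMatrix_le_smul_one (hh : 0 < h) (hnh : (n + 1) * h ≤ 1) :
    stiffnessMatrix n h ≤ (4 / h) • 1 := by
  rw [← sub_nonneg, stiffnessMatrix_eq hh hnh, show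
    (4 / h) • (1 : Matrix (Fin n) (Fin n) ℝ) - h⁻¹ • ((2 : ℝ) • 1 - (pathGraph n).adjMatrix ℝ) =
      h⁻¹ • ((2 : ℝ) • 1 + (pathGraph n).adjMatrix ℝ) by module]
  exact smul_nonneg (by positivity) zero_le_two_smul_one_add_pathGraph_adjMatrix

theorem smul_one_le_kroneckerSum₃_stiffnessMatrix (hh : 0 < h) (hnh : (n + 1) * h ≤ 1) :
    ((4 / 3) * h ^ 3) • 1 ≤ stiffnessMatrix n h ⊗ₖ (massMatrix n h ⊗ₖ massMatrix n h)
      + massMatrix n h ⊗ₖ (stiffnessMatrix n h ⊗ₖ massMatrix n h)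
      + massMatrix n h ⊗ₖ (massMatrix n h ⊗ₖ stiffnessMatrix n h) := by
  convert smul_one_le_kroneckerSum₃ (by positivity) (by positivity)
    (smul_one_le_stiffnessMatrix hh hnh) (smul_one_le_massMatrix hh hnh) using 2
  ring

theorem kroneckerSum₃_stiffnessMatrix_le_smul_one (hh : 0 < h) (hnh : (n + 1) * h ≤ 1) :
    stiffnessMatrix n h ⊗ₖ (massMatrix n h ⊗ₖ massMatrix n h)
      + massMatrix n h ⊗ₖ (stiffnessMatrix n h ⊗ₖ massMatrix n h)
      + massMatrix n h ⊗ₖ (massMatrix n h ⊗ₖ stiffnessMatrix n h) ≤ (12 * h) • 1 := by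
  convert kroneckerSum₃_le_smul_one
    ((smul_one_nonneg (by positivity)).trans (smul_one_le_stiffnessMatrix hh hnh))
    ((smul_one_nonneg (by positivity)).trans (smul_one_le_massMatrix hh hnh))
    (stiffnessMatrix_le_smul_one hh hnh) (massMatrix_le_smul_one hh hnh) using 2
  field_simp
  ring

theorem integrableOn_hat_mul_hat (h : ℝ) (i j : ℕ) :
    IntegrableOn (fun x => hat h i x * hat h j x) (Icc 0 1) := by
  unfold hat
  exact ((continuous_tent.comp (by fun_prop)).mul
    (continuous_tent.comp (by fun_prop))).integrableOn_Icc

theorem integrableOn_hatDeriv_mul_hatDeriv (h : ℝ) (i j : ℕ) :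
    IntegrableOn (fun x => hatDeriv h i x * hatDeriv h j x) (Icc 0 1) := by
  have hmeas : ∀ k : ℕ, Measurable (hatDeriv h k) := fun k =>
    measurable_const.mul (measurable_tentDeriv.comp (by fun_prop))
  refine Integrable.of_bound ((hmeas i).mul (hmeas j)).aestronglyMeasurable (h⁻¹ ^ 2)
    (ae_of_all _ fun x => ?_)
  rw [Real.norm_eq_abs, hatDeriv, hatDeriv, show ∀ a b : ℝ, h⁻¹ * a * (h⁻¹ * b) = h⁻¹ ^ 2 * (a * b)
    from fun a b => by ring, abs_mul, abs_mul, abs_of_nonneg (sq_nonneg _)]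
  calc h⁻¹ ^ 2 * (|tentDeriv (x / h - (i + 1))| * |tentDeriv (x / h - (j + 1))|)
      ≤ h⁻¹ ^ 2 * (1 * 1) := by gcongr <;> exact abs_tentDeriv_le _
    _ = h⁻¹ ^ 2 := by ring

end HatBasis

open HatBasis

theorem stmt3_general (n : ℕ) (h : ℝ) (hh : h = 1 / ((n : ℝ) + 1))
    (φ g : Fin n → ℝ → ℝ)
    (hφ : ∀ (i : Fin n) (x : ℝ), φ i x = max 0 (1 - |x / h - ((i.val : ℝ) + 1)|))
    (hg : ∀ (i : Fin n) (x : ℝ),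
      g i x = if (i.val : ℝ) * h < x ∧ x < ((i.val : ℝ) + 1) * h then 1 / h
        else if ((i.val : ℝ) + 1) * h < x ∧ x < ((i.val : ℝ) + 2) * h then -(1 / h)
        else 0)
    (M P : Matrix (Fin n) (Fin n) ℝ)
    (hM : ∀ i i', M i i' = ∫ x in Set.Icc (0:ℝ) 1, φ i x * φ i' x)
    (hP : ∀ i i', P i i' = ∫ x in Set.Icc (0:ℝ) 1, g i x * g i' x)
    (P3 : Matrix (Fin n × Fin n × Fin n) (Fin n × Fin n × Fin n) ℝ)
    (hP3 : ∀ i j k i' j' k', P3 (i, j, k) (i', j', k') =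
      ∫ p in (Set.Icc (0:ℝ) 1) ×ˢ (Set.Icc (0:ℝ) 1) ×ˢ (Set.Icc (0:ℝ) 1),
        (g i p.1 * φ j p.2.1 * φ k p.2.2) * (g i' p.1 * φ j' p.2.1 * φ k' p.2.2)
        + (φ i p.1 * g j p.2.1 * φ k p.2.2) * (φ i' p.1 * g j' p.2.1 * φ k' p.2.2)
        + (φ i p.1 * φ j p.2.1 * g k p.2.2) * (φ i' p.1 * φ j' p.2.1 * g k' p.2.2)) :
    (∀ i j k i' j' k', P3 (i, j, k) (i', j', k') =
      P i i' * M j j' * M k k' + M i i' * P j j' * M k k' + M i i' * M j j' * P k k') ∧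
    (∀ (lam : ℝ) (v : Fin n × Fin n × Fin n → ℝ), v ≠ 0 → P3.mulVec v = lam • v →
      (4 / 3) * h ^ 3 ≤ lam ∧ lam ≤ 12 * h) ∧
    (∀ (lam mu : ℝ) (v w : Fin n × Fin n × Fin n → ℝ), v ≠ 0 → w ≠ 0 →
      P3.mulVec v = lam • v → P3.mulVec w = mu • w → lam ≤ (9 / h ^ 2) * mu) := by
  have hpos : 0 < h := by rw [hh]; positivity
  have hnh : (n + 1) * h ≤ 1 := by rw [hh]; field_simp; rfl
  obtain rfl : φ = fun i : Fin n => hat h i := funext₂ hφ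
  obtain rfl : g = fun i : Fin n => hatDeriv h i :=
    funext₂ fun i x => (hg i x).trans (hatDeriv_eq_ite hpos i x).symm
  have hentries : ∀ i j k i' j' k', P3 (i, j, k) (i', j', k') =
      P i i' * M j j' * M k k' + M i i' * P j j' * M k k' + M i i' * M j j' * P k k' :=
    fun i j k i' j' k' => by
      rw [hP3, setIntegral_tensor_gradient_inner _ _ (fun a b => integrableOn_hat_mul_hat h a b)
        (fun a b => integrableOn_hatDeriv_mul_hatDeriv h a b), hM, hM, hM, hP, hP, hP]
  have hkron : P3 = P ⊗ₖ (M ⊗ₖ M) + M ⊗ₖ (P ⊗ₖ M) + M ⊗ₖ (M ⊗ₖ P) := by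
    ext ⟨i, j, k⟩ ⟨i', j', k'⟩
    simp only [hentries, Matrix.add_apply, kroneckerMap_apply]
    ring
  rw [show M = massMatrix n h from ext hM, show P = stiffnessMatrix n h from ext hP] at hkron
  have heig : ∀ (lam : ℝ) (v : Fin n × Fin n × Fin n → ℝ), v ≠ 0 → P3 *ᵥ v = lam • v →
      (4 / 3) * h ^ 3 ≤ lam ∧ lam ≤ 12 * h := fun lam v hv hPv =>
    ⟨le_of_smul_one_le_of_mulVec_eq_smul
        (hkron ▸ smul_one_le_kroneckerSum₃_stiffnessMatrix hpos hnh) hv hPv,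
      le_of_le_smul_one_of_mulVec_eq_smul
        (hkron ▸ kroneckerSum₃_stiffnessMatrix_le_smul_one hpos hnh) hv hPv⟩
  refine ⟨hentries, heig, fun lam mu v w hv hw hPv hPw => ?_⟩
  calc lam ≤ 12 * h := (heig lam v hv hPv).2
    _ = 9 / h ^ 2 * ((4 / 3) * h ^ 3) := by field_simp; ring
    _ ≤ 9 / h ^ 2 * mu := by gcongr; exact (heig mu w hw hPw).1

/-- **3D FEM Laplacian as a sum of Kronecker products.** With `n ≥ 1`, `h = 1/(n+1)`,
1D hat functions `φ_i` with a.e.-derivatives `g_i`, 1D mass matrix `M` and 1D Laplacian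
matrix `P`, the 3D Laplacian matrix
`P⁽³⁾_{(i,j,k),(i',j',k')} = ∫_{[0,1]³} ∇φ_{ijk} · ∇φ_{i'j'k'}` satisfies
`P⁽³⁾ = P ⊗ M ⊗ M + M ⊗ P ⊗ M + M ⊗ M ⊗ P` (stated entrywise under the identification
of `{1,…,n}³` with the index set).  Consequently every eigenvalue `λ` of `P⁽³⁾`
satisfies `(4/3)h³ ≤ λ ≤ 12h`, so the condition number of `P⁽³⁾` is at most `9/h²`. -/
theorem stmt3 (n : ℕ) (hn : 1 ≤ n) (h : ℝ) (hh : h = 1 / ((n : ℝ) + 1))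
    (φ g : Fin n → ℝ → ℝ)
    (hφ : ∀ (i : Fin n) (x : ℝ), φ i x = max 0 (1 - |x / h - ((i.val : ℝ) + 1)|))
    (hg : ∀ (i : Fin n) (x : ℝ),
      g i x = if (i.val : ℝ) * h < x ∧ x < ((i.val : ℝ) + 1) * h then 1 / h
        else if ((i.val : ℝ) + 1) * h < x ∧ x < ((i.val : ℝ) + 2) * h then -(1 / h)
        else 0)
    (M P : Matrix (Fin n) (Fin n) ℝ)
    (hM : ∀ i i', M i i' = ∫ x in Set.Icc (0:ℝ) 1, φ i x * φ i' x)
    (hP : ∀ i i', P i i' = ∫ x in Set.Icc (0:ℝ) 1, g i x * g i' x)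
    (P3 : Matrix (Fin n × Fin n × Fin n) (Fin n × Fin n × Fin n) ℝ)
    (hP3 : ∀ i j k i' j' k', P3 (i, j, k) (i', j', k') =
      ∫ p in (Set.Icc (0:ℝ) 1) ×ˢ (Set.Icc (0:ℝ) 1) ×ˢ (Set.Icc (0:ℝ) 1),
        (g i p.1 * φ j p.2.1 * φ k p.2.2) * (g i' p.1 * φ j' p.2.1 * φ k' p.2.2)
        + (φ i p.1 * g j p.2.1 * φ k p.2.2) * (φ i' p.1 * g j' p.2.1 * φ k' p.2.2)
        + (φ i p.1 * φ j p.2.1 * g k p.2.2) * (φ i' p.1 * φ j' p.2.1 * g k' p.2.2)) :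
    (∀ i j k i' j' k', P3 (i, j, k) (i', j', k') =
      P i i' * M j j' * M k k' + M i i' * P j j' * M k k' + M i i' * M j j' * P k k') ∧
    (∀ (lam : ℝ) (v : Fin n × Fin n × Fin n → ℝ), v ≠ 0 → P3.mulVec v = lam • v →
      (4 / 3) * h ^ 3 ≤ lam ∧ lam ≤ 12 * h) ∧
    (∀ (lam mu : ℝ) (v w : Fin n × Fin n × Fin n → ℝ), v ≠ 0 → w ≠ 0 →
      P3.mulVec v = lam • v → P3.mulVec w = mu • w → lam ≤ (9 / h ^ 2) * mu) :=
  stmt3_general n h hh φ g hφ hg M P hM hP P3 hP3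
end

section
/- Let n ≥ 1 be an integer, h = 1/(n+1), and let Σ_a : [0,1]³ → ℝ be a measurable function with 0 < Σ_min ≤ Σ_a(x) ≤ Σ_max for all x ∈ [0,1]³. Define the n³×n³ real matrix A by A_{(i,j,k),(i',j',k')} = ∫_{[0,1]³} Σ_a(x,y,z) φ_{ijk} φ_{i'j'k'}. Then A is symmetric positive definite and every eigenvalue λ of A satisfies Σ_min·h³/27 ≤ λ ≤ Σ_max·h³; in particular the condition number of A is at most 27·Σ_max/Σ_min, independent of n. -/
/-!
Writing `u = ∑ v_a φ_a`, the quadratic form of `A` is `vᵀ A v = ∫ Σ_a u²`, which lies between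
`Σ_min ∫ u²` and `Σ_max ∫ u²`. So everything reduces to two-sided bounds for the mass form
`∫ u²` of the tensor-product hat basis. In one dimension `u` is piecewise linear with nodal values
`a_k` (and `a_0 = a_{n+1} = 0`), and a cell contributes `h (a_k² + a_k a_{k+1} + a_{k+1}²) / 3`,
which lies between `h (a_k² + a_{k+1}²) / 6` and `h (a_k² + a_{k+1}²) / 2`; summing over cells
gives `h/3 · |c|² ≤ ∫ u² ≤ h · |c|²`. By Fubini such Riesz bounds multiply under tensor products,
giving `h³/27` and `h³` on the cube, and the Rayleigh quotient turns these into eigenvalue bounds.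
-/

open MeasureTheory Matrix

section Riesz

variable {X Y ι κ : Type*} [Fintype ι] [Fintype κ]

lemma sq_sum_mul_eq (c : ι → ℝ) (F : ι → ℝ) :
    (∑ i, c i * F i) ^ 2 = ∑ i, ∑ j, c i * c j * (F i * F j) := by
  rw [sq, Finset.sum_mul_sum]
  exact Finset.sum_congr rfl fun i _ => Finset.sum_congr rfl fun j _ => by ring

lemma sum_prod_mul_eq {f : ι → X → ℝ} {g : κ → Y → ℝ} (w : ι × κ → ℝ) (x : X) (y : Y) :
    ∑ p, w p * (f p.1 x * g p.2 y) = ∑ j, (∑ i, w (i, j) * f i x) * g j y := by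
  rw [Fintype.sum_prod_type_right]
  refine Finset.sum_congr rfl fun j _ => ?_
  rw [Finset.sum_mul]
  exact Finset.sum_congr rfl fun i _ => by ring

variable [MeasurableSpace X] [MeasurableSpace Y]

structure RieszBounds (μ : Measure X) (f : ι → X → ℝ) (a b : ℝ) : Prop where
  integrable_mul : ∀ i j, Integrable (fun x => f i x * f j x) μ
  le_integral : ∀ c : ι → ℝ, a * ∑ i, c i ^ 2 ≤ ∫ x, (∑ i, c i * f i x) ^ 2 ∂μ
  integral_le : ∀ c : ι → ℝ, ∫ x, (∑ i, c i * f i x) ^ 2 ∂μ ≤ b * ∑ i, c i ^ 2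

variable {μ : Measure X} {ν : Measure Y} {f : ι → X → ℝ} {g : κ → Y → ℝ} {a b a' b' : ℝ}

lemma integrable_sq_sum_mul (hf : ∀ i j, Integrable (fun x => f i x * f j x) μ) (c : ι → ℝ) :
    Integrable (fun x => (∑ i, c i * f i x) ^ 2) μ := by
  simp_rw [sq_sum_mul_eq]
  exact integrable_finsetSum _ fun i _ => integrable_finsetSum _ fun j _ => (hf i j).const_mul _

lemma RieszBounds.sum_integral_bounds (hf : RieszBounds μ f a b) (w : ι × κ → ℝ) :
    a * ∑ p, w p ^ 2 ≤ ∑ j, ∫ x, (∑ i, w (i, j) * f i x) ^ 2 ∂μ ∧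
      ∑ j, ∫ x, (∑ i, w (i, j) * f i x) ^ 2 ∂μ ≤ b * ∑ p, w p ^ 2 := by
  rw [Fintype.sum_prod_type_right, Finset.mul_sum, Finset.mul_sum]
  exact ⟨Finset.sum_le_sum fun j _ => hf.le_integral _,
    Finset.sum_le_sum fun j _ => hf.integral_le _⟩

theorem RieszBounds.prod [SFinite μ] [SFinite ν] (hf : RieszBounds μ f a b)
    (hg : RieszBounds ν g a' b') (ha' : 0 ≤ a') (hb' : 0 ≤ b') :
    RieszBounds (μ.prod ν) (fun (p : ι × κ) (z : X × Y) => f p.1 z.1 * g p.2 z.2)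
      (a * a') (b * b') := by
  have hmul : ∀ p q : ι × κ, Integrable (fun z : X × Y =>
      f p.1 z.1 * g p.2 z.2 * (f q.1 z.1 * g q.2 z.2)) (μ.prod ν) := fun p q => by
    simpa only [mul_mul_mul_comm] using
      (hf.integrable_mul p.1 q.1).mul_prod (hg.integrable_mul p.2 q.2)
  suffices ∀ w : ι × κ → ℝ,
      a * a' * ∑ p, w p ^ 2 ≤ ∫ z, (∑ p, w p * (f p.1 z.1 * g p.2 z.2)) ^ 2 ∂μ.prod ν ∧
      ∫ z, (∑ p, w p * (f p.1 z.1 * g p.2 z.2)) ^ 2 ∂μ.prod ν ≤ b * b' * ∑ p, w p ^ 2 from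
    ⟨hmul, fun w => (this w).1, fun w => (this w).2⟩
  intro w
  set Q : X → ℝ := fun x => ∑ j, (∑ i, w (i, j) * f i x) ^ 2
  set I : X → ℝ := fun x => ∫ y, (∑ j, (∑ i, w (i, j) * f i x) * g j y) ^ 2 ∂ν
  have hfubini : ∫ z, (∑ p, w p * (f p.1 z.1 * g p.2 z.2)) ^ 2 ∂μ.prod ν = ∫ x, I x ∂μ := by
    rw [integral_prod _ (integrable_sq_sum_mul hmul w)]
    simp only [I, sum_prod_mul_eq]
  have hI : Integrable I μ := by
    simpa only [sum_prod_mul_eq] using (integrable_sq_sum_mul hmul w).integral_prod_left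
  have hQ : Integrable Q μ :=
    integrable_finsetSum _ fun j _ => integrable_sq_sum_mul hf.integrable_mul _
  have hQ_eq : ∫ x, Q x ∂μ = ∑ j, ∫ x, (∑ i, w (i, j) * f i x) ^ 2 ∂μ :=
    integral_finsetSum _ fun j _ => integrable_sq_sum_mul hf.integrable_mul _
  have hsum := hf.sum_integral_bounds w
  rw [hfubini]
  constructor
  · calc a * a' * ∑ p, w p ^ 2 = a' * (a * ∑ p, w p ^ 2) := by ring
      _ ≤ a' * ∫ x, Q x ∂μ := by rw [hQ_eq]; exact mul_le_mul_of_nonneg_left hsum.1 ha'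
      _ = ∫ x, a' * Q x ∂μ := (integral_const_mul _ _).symm
      _ ≤ ∫ x, I x ∂μ := integral_mono (hQ.const_mul _) hI fun x => hg.le_integral _
  · calc ∫ x, I x ∂μ ≤ ∫ x, b' * Q x ∂μ :=
          integral_mono hI (hQ.const_mul _) fun x => hg.integral_le _
      _ = b' * ∫ x, Q x ∂μ := integral_const_mul _ _
      _ ≤ b' * (b * ∑ p, w p ^ 2) := by rw [hQ_eq]; exact mul_le_mul_of_nonneg_left hsum.2 hb'
      _ = b * b' * ∑ p, w p ^ 2 := by ring

end Riesz

section Hat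

variable {n : ℕ} {h : ℝ}

noncomputable def hat (h : ℝ) (i : Fin n) (x : ℝ) : ℝ := max 0 (1 - |x / h - ((i.val : ℝ) + 1)|)

lemma continuous_hat (i : Fin n) : Continuous (hat h i) := by
  unfold hat; fun_prop

lemma max_zero_one_sub_abs_sub_natCast {k m : ℕ} {t : ℝ} (h1 : (k : ℝ) ≤ t) (h2 : t ≤ k + 1) :
    max 0 (1 - |t - m|) = (if m = k then k + 1 - t else 0) + (if m = k + 1 then t - k else 0) := by
  rcases (by omega : m + 1 ≤ k ∨ m = k ∨ m = k + 1 ∨ k + 2 ≤ m) with hm | rfl | rfl | hm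
  · have : (m : ℝ) + 1 ≤ k := by exact_mod_cast hm
    rw [if_neg (by omega), if_neg (by omega), abs_of_nonneg (by linarith)]
    simp only [add_zero]; exact max_eq_left (by linarith)
  · rw [if_pos rfl, if_neg (by omega), abs_of_nonneg (by linarith), max_eq_right (by linarith)]
    ring
  · push_cast
    rw [if_neg (by omega), if_pos rfl, abs_of_nonpos (by linarith), max_eq_right (by linarith)]
    ring
  · have : (k : ℝ) + 2 ≤ m := by exact_mod_cast hm
    rw [if_neg (by omega), if_neg (by omega), abs_of_nonpos (by linarith)]
    simp only [add_zero]; exact max_eq_left (by linarith)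

/-- The value of `∑ i, c i * hat h i` at the grid point `m * h`. -/
def nodalValue (c : Fin n → ℝ) (m : ℕ) : ℝ := ∑ i : Fin n, if (i : ℕ) + 1 = m then c i else 0

lemma nodalValue_zero (c : Fin n → ℝ) : nodalValue c 0 = 0 := by
  simp [nodalValue]

lemma nodalValue_n_add_one (c : Fin n → ℝ) : nodalValue c (n + 1) = 0 :=
  Finset.sum_eq_zero fun i _ => if_neg (by omega)

lemma nodalValue_val_add_one (c : Fin n → ℝ) (i : Fin n) : nodalValue c (i + 1) = c i := by
  simp [nodalValue, Fin.val_inj]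

lemma sum_range_nodalValue_sq (c : Fin n → ℝ) :
    ∑ k ∈ Finset.range (n + 1), (nodalValue c k ^ 2 + nodalValue c (k + 1) ^ 2) =
      2 * ∑ i, c i ^ 2 := by
  have hinner : ∑ k ∈ Finset.range n, nodalValue c (k + 1) ^ 2 = ∑ i, c i ^ 2 := by
    rw [← Fin.sum_univ_eq_sum_range (fun k => nodalValue c (k + 1) ^ 2)]
    simp only [nodalValue_val_add_one]
  rw [Finset.sum_add_distrib, Finset.sum_range_succ', Finset.sum_range_succ, hinner,
    nodalValue_zero, nodalValue_n_add_one]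
  ring

lemma sum_mul_hat_eq_of_mem_cell (hh : 0 < h) (c : Fin n → ℝ) {k : ℕ} {x : ℝ}
    (hx1 : k * h ≤ x) (hx2 : x ≤ (k + 1) * h) :
    ∑ i, c i * hat h i x =
      nodalValue c k * (k + 1 - x / h) + nodalValue c (k + 1) * (x / h - k) := by
  have h1 : (k : ℝ) ≤ x / h := (le_div_iff₀ hh).2 hx1
  have h2 : x / h ≤ k + 1 := (div_le_iff₀ hh).2 hx2
  have hnode : ∀ i : Fin n, ((i : ℕ) : ℝ) + 1 = (((i : ℕ) + 1 : ℕ) : ℝ) := fun i => by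
    push_cast; rfl
  simp only [hat, hnode, max_zero_one_sub_abs_sub_natCast h1 h2, nodalValue, Finset.sum_mul,
    ← Finset.sum_add_distrib]
  refine Finset.sum_congr rfl fun i _ => ?_
  split_ifs <;> ring

lemma integral_sq_affine_on_cell (hh : 0 < h) (k a b : ℝ) :
    ∫ x in k * h..(k + 1) * h, (a * (k + 1 - x / h) + b * (x / h - k)) ^ 2 =
      h * (a ^ 2 + a * b + b ^ 2) / 3 := by
  set P : ℝ → ℝ := fun s => a ^ 2 + s * (2 * a * (b - a)) + s ^ 2 * (b - a) ^ 2
  have hP : ∫ s in (0 : ℝ)..1, P s = (a ^ 2 + a * b + b ^ 2) / 3 := by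
    rw [intervalIntegral.integral_add, intervalIntegral.integral_add]
    · simp only [intervalIntegral.integral_const, intervalIntegral.integral_mul_const, integral_id,
        integral_pow, smul_eq_mul]
      ring
    all_goals exact Continuous.intervalIntegrable (by fun_prop) _ _
  calc ∫ x in k * h..(k + 1) * h, (a * (k + 1 - x / h) + b * (x / h - k)) ^ 2
      = ∫ x in k * h..(k + 1) * h, P (x / h - k) :=
        intervalIntegral.integral_congr fun x _ => by simp only [P]; ring
    _ = h * ∫ s in (0 : ℝ)..1, P s := by
        rw [intervalIntegral.integral_comp_div_sub _ hh.ne', mul_div_cancel_right₀ _ hh.ne',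
          mul_div_cancel_right₀ _ hh.ne', add_sub_cancel_left, sub_self, smul_eq_mul]
    _ = h * (a ^ 2 + a * b + b ^ 2) / 3 := by rw [hP]; ring

lemma integral_sq_sum_mul_hat (hh : h = 1 / (n + 1)) (c : Fin n → ℝ) :
    ∫ x in Set.Icc 0 1, (∑ i, c i * hat h i x) ^ 2 =
      ∑ k ∈ Finset.range (n + 1), h * (nodalValue c k ^ 2 + nodalValue c k * nodalValue c (k + 1) +
        nodalValue c (k + 1) ^ 2) / 3 := by
  have hpos : 0 < h := by rw [hh]; positivity
  have hcont : Continuous fun x => (∑ i, c i * hat h i x) ^ 2 := by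
    have := continuous_hat (n := n) (h := h); fun_prop
  have hend : ((n + 1 : ℕ) : ℝ) * h = 1 := by rw [hh]; push_cast; field_simp
  rw [integral_Icc_eq_integral_Ioc, ← intervalIntegral.integral_of_le zero_le_one,
    ← hend, ← zero_mul h, ← Nat.cast_zero,
    ← intervalIntegral.sum_integral_adjacent_intervals (a := fun k : ℕ => (k : ℝ) * h)
      fun k _ => hcont.intervalIntegrable _ _]
  refine Finset.sum_congr rfl fun k _ => ?_
  push_cast
  rw [← integral_sq_affine_on_cell hpos]
  refine intervalIntegral.integral_congr fun x hx => ?_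
  rw [Set.uIcc_of_le (by nlinarith)] at hx
  rw [sum_mul_hat_eq_of_mem_cell hpos c hx.1 hx.2]

theorem rieszBounds_hat (hh : h = 1 / (n + 1)) :
    RieszBounds (volume.restrict (Set.Icc (0 : ℝ) 1)) (hat (n := n) h) (h / 3) h := by
  have hpos : 0 < h := by rw [hh]; positivity
  refine ⟨fun i j => ((continuous_hat i).mul (continuous_hat j)).integrableOn_Icc,
    fun c => ?_, fun c => ?_⟩ <;>
    rw [integral_sq_sum_mul_hat hh]
  · calc h / 3 * ∑ i, c i ^ 2
        = ∑ k ∈ Finset.range (n + 1), h / 6 * (nodalValue c k ^ 2 + nodalValue c (k + 1) ^ 2) := by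
          rw [← Finset.mul_sum, sum_range_nodalValue_sq]; ring
      _ ≤ _ := Finset.sum_le_sum fun k _ => by
          nlinarith [mul_nonneg hpos.le (sq_nonneg (nodalValue c k + nodalValue c (k + 1)))]
  · calc _ ≤ ∑ k ∈ Finset.range (n + 1),
          h / 2 * (nodalValue c k ^ 2 + nodalValue c (k + 1) ^ 2) := Finset.sum_le_sum fun k _ => by
          nlinarith [mul_nonneg hpos.le (sq_nonneg (nodalValue c k - nodalValue c (k + 1)))]
      _ = h * ∑ i, c i ^ 2 := by rw [← Finset.mul_sum, sum_range_nodalValue_sq]; ring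

theorem rieszBounds_hat_cube (hh : h = 1 / (n + 1)) :
    RieszBounds (volume.restrict (Set.Icc (0 : ℝ) 1 ×ˢ Set.Icc (0 : ℝ) 1 ×ˢ Set.Icc (0 : ℝ) 1))
      (fun (a : Fin n × Fin n × Fin n) (p : ℝ × ℝ × ℝ) =>
        hat h a.1 p.1 * hat h a.2.1 p.2.1 * hat h a.2.2 p.2.2) (h ^ 3 / 27) (h ^ 3) := by
  have hpos : 0 < h := by rw [hh]; positivity
  have h1 := rieszBounds_hat (n := n) hh
  simp only [mul_assoc]
  rw [show h ^ 3 / 27 = h / 3 * (h / 3 * (h / 3)) by ring, show h ^ 3 = h * (h * h) by ring,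
    Measure.volume_eq_prod, Measure.volume_eq_prod, ← Measure.prod_restrict,
    ← Measure.prod_restrict]
  exact h1.prod (h1.prod h1 (by positivity) hpos.le) (by positivity) (by positivity)

end Hat

section WeightedGram

variable {X ι : Type*} [MeasurableSpace X]

noncomputable def weightedGram (μ : Measure X) (S : X → ℝ) (Φ : ι → X → ℝ) : Matrix ι ι ℝ :=
  Matrix.of fun p q => ∫ x, S x * (Φ p x * Φ q x) ∂μ

variable {μ : Measure X} {S : X → ℝ} {Φ : ι → X → ℝ}

lemma weightedGram_isSymm : (weightedGram μ S Φ).IsSymm :=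
  Matrix.IsSymm.ext fun p q => by simp only [weightedGram, of_apply, mul_comm (Φ p _)]

variable [Fintype ι]

lemma dotProduct_weightedGram_mulVec
    (hint : ∀ p q, Integrable (fun x => S x * (Φ p x * Φ q x)) μ) (v : ι → ℝ) :
    v ⬝ᵥ weightedGram μ S Φ *ᵥ v = ∫ x, S x * (∑ p, v p * Φ p x) ^ 2 ∂μ := by
  have hpt : ∀ x, S x * (∑ p, v p * Φ p x) ^ 2 =
      ∑ p, ∑ q, v p * (v q * (S x * (Φ p x * Φ q x))) := fun x => by
    rw [sq_sum_mul_eq, Finset.mul_sum]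
    refine Finset.sum_congr rfl fun p _ => ?_
    rw [Finset.mul_sum]
    exact Finset.sum_congr rfl fun q _ => by ring
  simp_rw [hpt]
  rw [integral_finsetSum _ fun p _ => integrable_finsetSum _ fun q _ =>
    ((hint p q).const_mul _).const_mul _]
  simp only [dotProduct, mulVec, weightedGram, of_apply, Finset.mul_sum]
  refine Finset.sum_congr rfl fun p _ => ?_
  rw [integral_finsetSum _ fun q _ => ((hint p q).const_mul _).const_mul _]
  refine Finset.sum_congr rfl fun q _ => ?_
  rw [integral_const_mul, integral_const_mul, mul_comm (∫ x, _ ∂μ) (v q)]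

theorem RieszBounds.weightedGram_bounds {a b Smin Smax : ℝ} (hΦ : RieszBounds μ Φ a b)
    (hS : AEStronglyMeasurable S μ) (hSb : ∀ᵐ x ∂μ, Smin ≤ S x ∧ S x ≤ Smax)
    (hSmin : 0 ≤ Smin) (hle : Smin ≤ Smax) (v : ι → ℝ) :
    Smin * a * ∑ p, v p ^ 2 ≤ v ⬝ᵥ weightedGram μ S Φ *ᵥ v ∧
      v ⬝ᵥ weightedGram μ S Φ *ᵥ v ≤ Smax * b * ∑ p, v p ^ 2 := by
  have hnorm : ∀ᵐ x ∂μ, ‖S x‖ ≤ Smax := hSb.mono fun x hx => by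
    rw [Real.norm_of_nonneg (hSmin.trans hx.1)]; exact hx.2
  have hSmul : ∀ F : X → ℝ, Integrable F μ → Integrable (fun x => S x * F x) μ :=
    fun F hF => hF.bdd_mul hS hnorm
  have hu := integrable_sq_sum_mul hΦ.integrable_mul v
  rw [dotProduct_weightedGram_mulVec (fun p q => hSmul _ (hΦ.integrable_mul p q))]
  constructor
  · calc Smin * a * ∑ p, v p ^ 2 = Smin * (a * ∑ p, v p ^ 2) := by ring
      _ ≤ Smin * ∫ x, (∑ p, v p * Φ p x) ^ 2 ∂μ :=
          mul_le_mul_of_nonneg_left (hΦ.le_integral v) hSmin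
      _ = ∫ x, Smin * (∑ p, v p * Φ p x) ^ 2 ∂μ := (integral_const_mul _ _).symm
      _ ≤ _ := integral_mono_ae (hu.const_mul _) (hSmul _ hu)
          (hSb.mono fun x hx => mul_le_mul_of_nonneg_right hx.1 (sq_nonneg _))
  · calc _ ≤ ∫ x, Smax * (∑ p, v p * Φ p x) ^ 2 ∂μ := integral_mono_ae (hSmul _ hu)
          (hu.const_mul _) (hSb.mono fun x hx => mul_le_mul_of_nonneg_right hx.2 (sq_nonneg _))
      _ = Smax * ∫ x, (∑ p, v p * Φ p x) ^ 2 ∂μ := integral_const_mul _ _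
      _ ≤ Smax * (b * ∑ p, v p ^ 2) :=
          mul_le_mul_of_nonneg_left (hΦ.integral_le v) (hSmin.trans hle)
      _ = Smax * b * ∑ p, v p ^ 2 := by ring

end WeightedGram

section Rayleigh

variable {ι : Type*} [Fintype ι] {A : Matrix ι ι ℝ} {c : ℝ} {v : ι → ℝ} {lam : ℝ}

lemma sum_sq_pos_of_ne_zero (hv : v ≠ 0) : 0 < ∑ i, v i ^ 2 := by
  obtain ⟨i, hi⟩ := Function.ne_iff.1 hv
  exact Finset.sum_pos' (fun j _ => sq_nonneg _) ⟨i, Finset.mem_univ _, sq_pos_iff.2 hi⟩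

lemma dotProduct_mulVec_of_mulVec_eq_smul (hev : A *ᵥ v = lam • v) :
    v ⬝ᵥ A *ᵥ v = lam * ∑ i, v i ^ 2 := by
  rw [hev, dotProduct_smul, smul_eq_mul]
  simp only [dotProduct, sq]

lemma le_eigenvalue_of_forall_le_dotProduct (hA : ∀ w, c * ∑ i, w i ^ 2 ≤ w ⬝ᵥ A *ᵥ w)
    (hv : v ≠ 0) (hev : A *ᵥ v = lam • v) : c ≤ lam :=
  le_of_mul_le_mul_right ((dotProduct_mulVec_of_mulVec_eq_smul hev) ▸ hA v)
    (sum_sq_pos_of_ne_zero hv)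

lemma eigenvalue_le_of_forall_dotProduct_le (hA : ∀ w, w ⬝ᵥ A *ᵥ w ≤ c * ∑ i, w i ^ 2)
    (hv : v ≠ 0) (hev : A *ᵥ v = lam • v) : lam ≤ c :=
  le_of_mul_le_mul_right ((dotProduct_mulVec_of_mulVec_eq_smul hev) ▸ hA v)
    (sum_sq_pos_of_ne_zero hv)

lemma posDef_of_forall_le_dotProduct (hsymm : A.IsSymm) (hc : 0 < c)
    (hA : ∀ w, c * ∑ i, w i ^ 2 ≤ w ⬝ᵥ A *ᵥ w) : A.PosDef := by
  refine .of_dotProduct_mulVec_pos (by rwa [IsHermitian, conjTranspose_eq_transpose_of_trivial])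
    fun w hw => ?_
  rw [star_trivial]
  exact (mul_pos hc (sum_sq_pos_of_ne_zero hw)).trans_le (hA w)

end Rayleigh

theorem stmt5_general (n : ℕ) (h : ℝ) (hh : h = 1 / ((n : ℝ) + 1))
    (φ : Fin n → ℝ → ℝ)
    (hφ : ∀ (i : Fin n) (x : ℝ), φ i x = max 0 (1 - |x / h - ((i.val : ℝ) + 1)|))
    (Sa : ℝ × ℝ × ℝ → ℝ) (Smin Smax : ℝ) (hSmin : 0 < Smin)
    (hSameas : Measurable Sa)
    (hSa : ∀ p ∈ (Set.Icc (0:ℝ) 1) ×ˢ (Set.Icc (0:ℝ) 1) ×ˢ (Set.Icc (0:ℝ) 1),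
      Smin ≤ Sa p ∧ Sa p ≤ Smax)
    (A : Matrix (Fin n × Fin n × Fin n) (Fin n × Fin n × Fin n) ℝ)
    (hA : ∀ i j k i' j' k', A (i, j, k) (i', j', k') =
      ∫ p in (Set.Icc (0:ℝ) 1) ×ˢ (Set.Icc (0:ℝ) 1) ×ˢ (Set.Icc (0:ℝ) 1),
        Sa p * ((φ i p.1 * φ j p.2.1 * φ k p.2.2) * (φ i' p.1 * φ j' p.2.1 * φ k' p.2.2))) :
    A.IsSymm ∧ A.PosDef ∧
    (∀ (lam : ℝ) (v : Fin n × Fin n × Fin n → ℝ), v ≠ 0 → A.mulVec v = lam • v →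
      Smin * h ^ 3 / 27 ≤ lam ∧ lam ≤ Smax * h ^ 3) ∧
    (∀ (lam mu : ℝ) (v w : Fin n × Fin n × Fin n → ℝ), v ≠ 0 → w ≠ 0 →
      A.mulVec v = lam • v → A.mulVec w = mu • w → lam ≤ 27 * (Smax / Smin) * mu) := by
  obtain rfl : φ = hat h := funext fun i => funext (hφ i)
  have hle : Smin ≤ Smax := by obtain ⟨h1, h2⟩ := hSa (0, 0, 0) (by simp); exact h1.trans h2
  obtain rfl : A = weightedGram (volume.restrict _) Sa
      fun (a : Fin n × Fin n × Fin n) (p : ℝ × ℝ × ℝ) =>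
        hat h a.1 p.1 * hat h a.2.1 p.2.1 * hat h a.2.2 p.2.2 := by
    ext ⟨i, j, k⟩ ⟨i', j', k'⟩
    exact hA i j k i' j' k'
  have hquad := (rieszBounds_hat_cube hh).weightedGram_bounds hSameas.aestronglyMeasurable
    (ae_restrict_of_forall_mem
      (measurableSet_Icc.prod (measurableSet_Icc.prod measurableSet_Icc)) hSa) hSmin.le hle
  have heig : ∀ (lam : ℝ) (v : Fin n × Fin n × Fin n → ℝ), v ≠ 0 → _ *ᵥ v = lam • v →
      Smin * h ^ 3 / 27 ≤ lam ∧ lam ≤ Smax * h ^ 3 := fun lam v hv hev => by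
    rw [mul_div_assoc]
    exact ⟨le_eigenvalue_of_forall_le_dotProduct (fun w => (hquad w).1) hv hev,
      eigenvalue_le_of_forall_dotProduct_le (fun w => (hquad w).2) hv hev⟩
  have hpos : 0 < h := by rw [hh]; positivity
  have hSmax : 0 < Smax := hSmin.trans_le hle
  refine ⟨weightedGram_isSymm, posDef_of_forall_le_dotProduct weightedGram_isSymm
    (by positivity) fun w => (hquad w).1, heig, fun lam mu v w hv hw hev hew => ?_⟩
  calc lam ≤ Smax * h ^ 3 := (heig lam v hv hev).2
    _ = 27 * (Smax / Smin) * (Smin * h ^ 3 / 27) := by field_simp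
    _ ≤ 27 * (Smax / Smin) * mu :=
        mul_le_mul_of_nonneg_left (heig mu w hw hew).1 (by positivity)

/-- **Absorption matrix `A`.** With `n ≥ 1`, `h = 1/(n+1)`, 3D hat functions
`φ_{ijk}(x,y,z) = φ_i(x)φ_j(y)φ_k(z)`, and a measurable coefficient `Σ_a` with
`0 < Σ_min ≤ Σ_a ≤ Σ_max` on `[0,1]³`, the matrix
`A_{(i,j,k),(i',j',k')} = ∫_{[0,1]³} Σ_a φ_{ijk} φ_{i'j'k'}` is symmetric positive
definite, every eigenvalue `λ` of `A` satisfies `Σ_min·h³/27 ≤ λ ≤ Σ_max·h³`, and hence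
the condition number of `A` is at most `27·Σ_max/Σ_min`, independent of `n`. -/
theorem stmt5 (n : ℕ) (hn : 1 ≤ n) (h : ℝ) (hh : h = 1 / ((n : ℝ) + 1))
    (φ : Fin n → ℝ → ℝ)
    (hφ : ∀ (i : Fin n) (x : ℝ), φ i x = max 0 (1 - |x / h - ((i.val : ℝ) + 1)|))
    (Sa : ℝ × ℝ × ℝ → ℝ) (Smin Smax : ℝ) (hSmin : 0 < Smin)
    (hSameas : Measurable Sa)
    (hSa : ∀ p ∈ (Set.Icc (0:ℝ) 1) ×ˢ (Set.Icc (0:ℝ) 1) ×ˢ (Set.Icc (0:ℝ) 1),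
      Smin ≤ Sa p ∧ Sa p ≤ Smax)
    (A : Matrix (Fin n × Fin n × Fin n) (Fin n × Fin n × Fin n) ℝ)
    (hA : ∀ i j k i' j' k', A (i, j, k) (i', j', k') =
      ∫ p in (Set.Icc (0:ℝ) 1) ×ˢ (Set.Icc (0:ℝ) 1) ×ˢ (Set.Icc (0:ℝ) 1),
        Sa p * ((φ i p.1 * φ j p.2.1 * φ k p.2.2) * (φ i' p.1 * φ j' p.2.1 * φ k' p.2.2))) :
    A.IsSymm ∧ A.PosDef ∧
    (∀ (lam : ℝ) (v : Fin n × Fin n × Fin n → ℝ), v ≠ 0 → A.mulVec v = lam • v →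
      Smin * h ^ 3 / 27 ≤ lam ∧ lam ≤ Smax * h ^ 3) ∧
    (∀ (lam mu : ℝ) (v w : Fin n × Fin n × Fin n → ℝ), v ≠ 0 → w ≠ 0 →
      A.mulVec v = lam • v → A.mulVec w = mu • w → lam ≤ 27 * (Smax / Smin) * mu) :=
  stmt5_general n h hh φ hφ Sa Smin Smax hSmin hSameas hSa A hA
end

section
/- Let 1 ≤ l ≤ L and d ≥ 1 be integers, write n_j = 2^j − 1, and let I_{l→L} = I_{n_{L−1}} I_{n_{L−2}} ⋯ I_{n_l} (matrix product mapping ℝ^{n_l} to ℝ^{n_L}, with I_{L→L} the identity on ℝ^{n_L}). Then the d-fold Kronecker product I_{l→L}^{⊗d}, regarded as a linear map from ℝ^{n_l^d} to ℝ^{n_L^d}, has ℓ²-operator norm at most 2^{d(L−l)/2}. -/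
open Finset

/-- Schur test, quadratic-form version. -/
lemma my_schur_test {α β : Type*} [Fintype α] [Fintype β] (A : Matrix α β ℝ) (R Cc : ℝ)
    (hA : ∀ r x, 0 ≤ A r x) (hR : ∀ r, ∑ x, A r x ≤ R) (hCc : ∀ x, ∑ r, A r x ≤ Cc)
    (hR0 : 0 ≤ R) (v : β → ℝ) :
    ∑ r, (A.mulVec v r) ^ 2 ≤ R * Cc * ∑ x, (v x) ^ 2 := by
  have step : ∀ r, (A.mulVec v r) ^ 2 ≤ R * ∑ x, A r x * (v x) ^ 2 := by
    intro r
    have cs := Finset.sum_mul_sq_le_sq_mul_sq Finset.univ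
      (fun x => Real.sqrt (A r x)) (fun x => Real.sqrt (A r x) * v x)
    have e1 : ∀ x, Real.sqrt (A r x) * (Real.sqrt (A r x) * v x) = A r x * v x := by
      intro x; rw [← mul_assoc, Real.mul_self_sqrt (hA r x)]
    have e2 : ∀ x, (Real.sqrt (A r x)) ^ 2 = A r x := fun x => Real.sq_sqrt (hA r x)
    have e3 : ∀ x, (Real.sqrt (A r x) * v x) ^ 2 = A r x * (v x) ^ 2 := by
      intro x; rw [mul_pow, e2]
    simp only [e1, e2, e3] at cs
    have : (A.mulVec v r) ^ 2 = (∑ x, A r x * v x) ^ 2 := by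
      simp [Matrix.mulVec, dotProduct]
    rw [this]
    refine cs.trans ?_
    have h2 : (0:ℝ) ≤ ∑ x, A r x * (v x) ^ 2 :=
      Finset.sum_nonneg fun x _ => mul_nonneg (hA r x) (sq_nonneg _)
    exact mul_le_mul_of_nonneg_right (hR r) h2
  calc ∑ r, (A.mulVec v r) ^ 2 ≤ ∑ r, R * ∑ x, A r x * (v x) ^ 2 :=
        Finset.sum_le_sum fun r _ => step r
    _ = R * ∑ x, (∑ r, A r x) * (v x) ^ 2 := by
        rw [← Finset.mul_sum, Finset.sum_comm]
        simp_rw [Finset.sum_mul]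
    _ ≤ R * ∑ x, Cc * (v x) ^ 2 := by
        refine mul_le_mul_of_nonneg_left (Finset.sum_le_sum fun x _ => ?_) hR0
        exact mul_le_mul_of_nonneg_right (hCc x) (sq_nonneg _)
    _ = R * Cc * ∑ x, (v x) ^ 2 := by rw [← Finset.mul_sum, mul_assoc]

/-- At most one index satisfies the predicate: indicator sum bound. -/
lemma my_sum_ite_le {β : Type*} [Fintype β] (P : β → Prop) [DecidablePred P]
    (huniq : ∀ x y, P x → P y → x = y) (c : ℝ) (hc : 0 ≤ c) :
    ∑ x, (if P x then c else 0) ≤ c := by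
  rw [← Finset.sum_filter]
  rcases Finset.eq_empty_or_nonempty (Finset.univ.filter P) with h | ⟨x, hx⟩
  · simp [h, hc]
  · have : Finset.univ.filter P = {x} := by
      apply Finset.eq_singleton_iff_unique_mem.2
      refine ⟨hx, fun y hy => ?_⟩
      exact huniq y x (Finset.mem_filter.1 hy).2 (Finset.mem_filter.1 hx).2
    simp [this]

/-- Apply a quadratically-bounded matrix in the first coordinate of a product. -/
lemma my_fst_bound {α β γ : Type*} [Fintype α] [Fintype β] [Fintype γ]
    (A : Matrix α β ℝ) (C : ℝ)
    (h : ∀ v : β → ℝ, ∑ r, (A.mulVec v r) ^ 2 ≤ C * ∑ x, (v x) ^ 2)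
    (u : β × γ → ℝ) :
    ∑ p : α × γ, (∑ x, A p.1 x * u (x, p.2)) ^ 2 ≤ C * ∑ q : β × γ, (u q) ^ 2 := by
  rw [Fintype.sum_prod_type, Fintype.sum_prod_type]
  rw [Finset.sum_comm]
  have key : ∀ s : γ, ∑ r, (∑ x, A r x * u (x, s)) ^ 2 ≤ C * ∑ x, (u (x, s)) ^ 2 := by
    intro s
    have := h (fun x => u (x, s))
    simpa [Matrix.mulVec, dotProduct] using this
  calc ∑ s, ∑ r, (∑ x, A r x * u (x, s)) ^ 2 ≤ ∑ s, C * ∑ x, (u (x, s)) ^ 2 :=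
        Finset.sum_le_sum fun s _ => key s
    _ = C * ∑ x, ∑ s, (u (x, s)) ^ 2 := by rw [← Finset.mul_sum, Finset.sum_comm]

set_option maxHeartbeats 1600000 in
/-- Kronecker power quadratic bound. -/
lemma my_kron_bound {α β : Type*} [Fintype α] [Fintype β]
    (A : Matrix α β ℝ) (C : ℝ) (hC : 0 ≤ C)
    (h : ∀ v : β → ℝ, ∑ r, (A.mulVec v r) ^ 2 ≤ C * ∑ x, (v x) ^ 2) :
    ∀ d : ℕ, ∀ u : (Fin d → β) → ℝ,
      ∑ f : Fin d → α, (∑ g : Fin d → β, (∏ t, A (f t) (g t)) * u g) ^ 2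
        ≤ C ^ d * ∑ g : Fin d → β, (u g) ^ 2 := by
  intro d
  induction d with
  | zero => intro u; simp
  | succ d ih =>
      intro u
      classical
      set w : β × (Fin d → α) → ℝ := fun p =>
        ∑ g' : Fin d → β, (∏ t, A (p.2 t) (g' t)) * u (Fin.cons p.1 g' : Fin (d+1) → β)
        with hw
      have key : ∀ (a : α) (f' : Fin d → α),
          (∑ g : Fin (d+1) → β, (∏ t, A ((Fin.cons a f' : Fin (d+1) → α) t) (g t)) * u g)
            = ∑ b : β, A a b * w (b, f') := by
        intro a f'
        rw [← Equiv.sum_comp (Fin.consEquiv fun _ => β)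
          (fun g => (∏ t, A ((Fin.cons a f' : Fin (d+1) → α) t) (g t)) * u g)]
        rw [Fintype.sum_prod_type]
        refine Finset.sum_congr rfl fun b _ => ?_
        rw [hw]
        simp only [Finset.mul_sum]
        refine Finset.sum_congr rfl fun g' _ => ?_
        simp only [Fin.consEquiv_apply]
        rw [Fin.prod_univ_succ]
        simp only [Fin.cons_zero, Fin.cons_succ]
        rw [mul_assoc]
        rfl
      calc ∑ f : Fin (d+1) → α, (∑ g : Fin (d+1) → β, (∏ t, A (f t) (g t)) * u g) ^ 2
          = ∑ p : α × (Fin d → α), (∑ b, A p.1 b * w (b, p.2)) ^ 2 := by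
            refine Fintype.sum_equiv (Fin.consEquiv fun _ => α).symm _ _ fun f => ?_
            have hk := key (f 0) (Fin.tail f)
            simp only [Fin.cons_self_tail] at hk
            rw [hk]
            rfl
        _ ≤ C * ∑ q : β × (Fin d → α), (w q) ^ 2 := my_fst_bound A C h w
        _ ≤ C * (C ^ d * ∑ g : Fin (d+1) → β, (u g) ^ 2) := by
            refine mul_le_mul_of_nonneg_left ?_ hC
            calc ∑ q : β × (Fin d → α), (w q) ^ 2
                = ∑ b : β, ∑ f' : Fin d → α, (w (b, f')) ^ 2 := Fintype.sum_prod_type _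
              _ ≤ ∑ b : β, C ^ d * ∑ g' : Fin d → β,
                    (u (Fin.cons b g' : Fin (d+1) → β)) ^ 2 :=
                  Finset.sum_le_sum fun b _ =>
                    ih (fun g' => u (Fin.cons b g' : Fin (d+1) → β))
              _ = C ^ d * ∑ q : β × (Fin d → β),
                    (u (Fin.cons q.1 q.2 : Fin (d+1) → β)) ^ 2 := by
                  rw [← Finset.mul_sum, Fintype.sum_prod_type]
              _ = C ^ d * ∑ g : Fin (d+1) → β, (u g) ^ 2 := by
                  congr 1
                  refine (Fintype.sum_equiv (Fin.consEquiv fun _ => β).symm _ _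
                    fun g => ?_).symm
                  simp [Fin.cons_self_tail]
        _ = C ^ (d+1) * ∑ g : Fin (d+1) → β, (u g) ^ 2 := by ring

set_option maxHeartbeats 1600000 in
/-- **Norm of the Kronecker power of the multi-level interpolation operator.**
For each `j`, `I j` is the one-level interpolation matrix from level `j` (with
`n_j = 2^j − 1` nodes) to level `j+1`, and `J j = I (L−1) ⋯ I j` is the composed
interpolation from level `j` to level `L` (with `J L` the identity).  The `d`-fold
Kronecker power of `J l` — realized as the matrix `K` on functions `Fin d → Fin n_L`
with `K f g = ∏ t, (J l) (f t) (g t)` — has `ℓ²`-operator norm at most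
`2^{d(L−l)/2} = (√2)^{d(L−l)}`. -/
theorem stmt11 (l L d : ℕ) (hl : 1 ≤ l) (hlL : l ≤ L) (hd : 1 ≤ d)
    (I : ∀ j : ℕ, Matrix (Fin (2 ^ (j + 1) - 1)) (Fin (2 ^ j - 1)) ℝ)
    (hI : ∀ (j : ℕ) (r : Fin (2 ^ (j + 1) - 1)) (x : Fin (2 ^ j - 1)),
      I j r x = if r.val = 2 * x.val + 1 then 1
        else if r.val = 2 * x.val ∨ r.val = 2 * x.val + 2 then (1 / 2 : ℝ) else 0)
    (J : ∀ j : ℕ, Matrix (Fin (2 ^ L - 1)) (Fin (2 ^ j - 1)) ℝ)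
    (hJL : J L = 1)
    (hJ : ∀ j, j < L → J j = J (j + 1) * I j)
    (K : Matrix (Fin d → Fin (2 ^ L - 1)) (Fin d → Fin (2 ^ l - 1)) ℝ)
    (hK : ∀ (f : Fin d → Fin (2 ^ L - 1)) (g : Fin d → Fin (2 ^ l - 1)),
      K f g = ∏ t, J l (f t) (g t)) :
    ∀ u : (Fin d → Fin (2 ^ l - 1)) → ℝ,
      Real.sqrt (∑ f, (K.mulVec u f) ^ 2) ≤
        Real.sqrt 2 ^ (d * (L - l)) * Real.sqrt (∑ g, (u g) ^ 2) := by
  classical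
  -- Step 1: one-level bound.
  have Ibound : ∀ j, ∀ v : Fin (2 ^ j - 1) → ℝ,
      ∑ r, ((I j).mulVec v r) ^ 2 ≤ 2 * ∑ x, (v x) ^ 2 := by
    intro j v
    have h2 : (2:ℝ) = 1 * 2 := by norm_num
    rw [h2]
    apply my_schur_test (I j) 1 2
    · intro r x
      rw [hI]
      split_ifs <;> norm_num
    · -- row sums ≤ 1
      intro r
      rcases Nat.even_or_odd r.val with ⟨m, hm⟩ | ⟨m, hm⟩
      · -- even row: r = 2m, entries 1/2 at x = m and x = m-1
        have : ∀ x : Fin (2 ^ j - 1), I j r x =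
            (if r.val = 2 * x.val then (1/2:ℝ) else 0)
            + (if r.val = 2 * x.val + 2 then (1/2:ℝ) else 0) := by
          intro x
          rw [hI]
          split_ifs with h1 h2 h3 h4 h5 <;> try omega
          all_goals norm_num
        rw [Finset.sum_congr rfl fun x _ => this x, Finset.sum_add_distrib]
        have b1 : ∑ x : Fin (2 ^ j - 1), (if r.val = 2 * x.val then (1/2:ℝ) else 0)
            ≤ 1/2 := by
          apply my_sum_ite_le _ _ _ (by norm_num)
          intro x y hx hy; exact Fin.ext (by omega)
        have b2 : ∑ x : Fin (2 ^ j - 1), (if r.val = 2 * x.val + 2 then (1/2:ℝ) else 0)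
            ≤ 1/2 := by
          apply my_sum_ite_le _ _ _ (by norm_num)
          intro x y hx hy; exact Fin.ext (by omega)
        linarith
      · -- odd row
        have : ∀ x : Fin (2 ^ j - 1), I j r x =
            (if r.val = 2 * x.val + 1 then (1:ℝ) else 0) := by
          intro x
          rw [hI]
          split_ifs with h1 h2 h3 <;> try omega
          all_goals norm_num
        rw [Finset.sum_congr rfl fun x _ => this x]
        apply my_sum_ite_le _ _ _ (by norm_num)
        intro x y hx hy; exact Fin.ext (by omega)
    · -- column sums ≤ 2
      intro x
      have : ∀ r : Fin (2 ^ (j+1) - 1), I j r x =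
          (if r.val = 2 * x.val + 1 then (1:ℝ) else 0)
          + (if r.val = 2 * x.val then (1/2:ℝ) else 0)
          + (if r.val = 2 * x.val + 2 then (1/2:ℝ) else 0) := by
        intro r
        rw [hI]
        split_ifs <;> first | omega | norm_num
      rw [Finset.sum_congr rfl fun r _ => this r, Finset.sum_add_distrib,
        Finset.sum_add_distrib]
      have b1 : ∑ r : Fin (2 ^ (j+1) - 1), (if r.val = 2 * x.val + 1 then (1:ℝ) else 0)
          ≤ 1 := by
        apply my_sum_ite_le _ _ _ (by norm_num)
        intro a b ha hb; exact Fin.ext (by omega)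
      have b2 : ∑ r : Fin (2 ^ (j+1) - 1), (if r.val = 2 * x.val then (1/2:ℝ) else 0)
          ≤ 1/2 := by
        apply my_sum_ite_le _ _ _ (by norm_num)
        intro a b ha hb; exact Fin.ext (by omega)
      have b3 : ∑ r : Fin (2 ^ (j+1) - 1), (if r.val = 2 * x.val + 2 then (1/2:ℝ) else 0)
          ≤ 1/2 := by
        apply my_sum_ite_le _ _ _ (by norm_num)
        intro a b ha hb; exact Fin.ext (by omega)
      linarith
    · norm_num
  -- Step 2: multi-level bound.
  have Jbound : ∀ k j, j + k = L → ∀ v : Fin (2 ^ j - 1) → ℝ,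
      ∑ r, ((J j).mulVec v r) ^ 2 ≤ 2 ^ k * ∑ x, (v x) ^ 2 := by
    intro k
    induction k with
    | zero =>
        intro j hj v
        have hjL : j = L := by omega
        subst hjL
        rw [hJL, Matrix.one_mulVec]
        simp
    | succ k ih =>
        intro j hj v
        have hjL : j < L := by omega
        rw [hJ j hjL]
        have comp : (J (j+1) * I j).mulVec v = (J (j+1)).mulVec ((I j).mulVec v) :=
          (Matrix.mulVec_mulVec v (J (j+1)) (I j)).symm
        rw [comp]
        calc ∑ r, ((J (j+1)).mulVec ((I j).mulVec v) r) ^ 2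
            ≤ 2 ^ k * ∑ s, ((I j).mulVec v s) ^ 2 := ih (j+1) (by omega) _
          _ ≤ 2 ^ k * (2 * ∑ x, (v x) ^ 2) :=
              mul_le_mul_of_nonneg_left (Ibound j v) (by positivity)
          _ = 2 ^ (k+1) * ∑ x, (v x) ^ 2 := by ring
  -- Step 3: Kronecker power.
  intro u
  have kb := my_kron_bound (J l) (2 ^ (L - l)) (by positivity)
    (Jbound (L - l) l (by omega)) d u
  have hKmul : ∀ f, K.mulVec u f = ∑ g, (∏ t, J l (f t) (g t)) * u g := by
    intro f
    simp only [Matrix.mulVec, dotProduct]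
    exact Finset.sum_congr rfl fun g _ => by rw [hK]
  have main : ∑ f, (K.mulVec u f) ^ 2 ≤ 2 ^ (d * (L - l)) * ∑ g, (u g) ^ 2 := by
    have e : ((2:ℝ) ^ (L - l)) ^ d = 2 ^ (d * (L - l)) := by
      rw [← pow_mul, Nat.mul_comm]
    calc ∑ f, (K.mulVec u f) ^ 2
        = ∑ f : Fin d → Fin (2 ^ L - 1),
            (∑ g : Fin d → Fin (2 ^ l - 1), (∏ t, J l (f t) (g t)) * u g) ^ 2 := by
          exact Finset.sum_congr rfl fun f _ => by rw [hKmul]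
      _ ≤ ((2:ℝ) ^ (L - l)) ^ d * ∑ g : Fin d → Fin (2 ^ l - 1), (u g) ^ 2 := kb
      _ = 2 ^ (d * (L - l)) * ∑ g, (u g) ^ 2 := by rw [e]
  -- Step 4: take square roots.
  have sqrtpow : ∀ n : ℕ, Real.sqrt 2 ^ n = Real.sqrt (2 ^ n) := by
    intro n
    induction n with
    | zero => simp
    | succ n ih => rw [pow_succ, pow_succ, ih, Real.sqrt_mul (by positivity)]
  calc Real.sqrt (∑ f, (K.mulVec u f) ^ 2)
      ≤ Real.sqrt (2 ^ (d * (L - l)) * ∑ g, (u g) ^ 2) := Real.sqrt_le_sqrt main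
    _ = Real.sqrt (2 ^ (d * (L - l))) * Real.sqrt (∑ g, (u g) ^ 2) :=
        Real.sqrt_mul (by positivity) _
    _ = Real.sqrt 2 ^ (d * (L - l)) * Real.sqrt (∑ g, (u g) ^ 2) := by rw [sqrtpow]
end
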